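/- arXiv:2110.03812 — 6 statements merged into one kernel-verified Lean document; each statement's English description precedes it below -/
import Mathlib

section
/- Let A be an entrywise nonnegative real square matrix indexed by a nonempty finite type. Then a real number λ is a complementarity eigenvalue of A if and only if there exists a nonempty subset S of the index set such that the principal submatrix A_S (the submatrix of A with rows and columns indexed by S) is either irreducible or the zero matrix, and λ equals the spectral radius ρ(A_S). -/
open Matrix Polynomial

/-- `lam` is a complementarity eigenvalue of the real square matrix `A`. -/
def isComplEig {V : Type*} [Fintype V] (A : Matrix V V ℝ) (lam : ℝ) : Prop :=
  ∃ x : V → ℝ, x ≠ 0 ∧ 0 ≤ x ∧ 0 ≤ A.mulVec x - lam • x ∧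
    ∑ i, x i * (A.mulVec x - lam • x) i = 0

/-- Spectral radius of a real square matrix: supremum of the norms of the
complex eigenvalues of its complexification. -/
noncomputable def specRad {V : Type*} [Fintype V] [DecidableEq V] (B : Matrix V V ℝ) : ℝ :=
  sSup ((fun μ : ℂ => ‖μ‖) '' spectrum ℂ (B.map (Complex.ofReal : ℝ → ℂ)))

/-- Principal submatrix of `A` with rows and columns indexed by `S`. -/
def psub {V : Type*} (A : Matrix V V ℝ) (S : Finset V) : Matrix S S ℝ :=
  A.submatrix Subtype.val Subtype.val

/-- A nonnegative square matrix is irreducible if every entry of some power is positive. -/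
def MatIrreducible {V : Type*} [Fintype V] [DecidableEq V] (B : Matrix V V ℝ) : Prop :=
  ∀ i j, ∃ k : ℕ, 1 ≤ k ∧ 0 < (B ^ k) i j

set_option linter.unusedSectionVars false
set_option maxHeartbeats 1000000

section SR
variable {W : Type*} [Fintype W] [DecidableEq W] [Nonempty W]

lemma specRad_eq_of_posEigen (B : Matrix W W ℝ) (hB : ∀ i j, 0 ≤ B i j)
    (y : W → ℝ) (hy : ∀ i, 0 < y i) (lam : ℝ) (heig : B.mulVec y = lam • y) :
    specRad B = lam := by
  obtain ⟨i₀⟩ := ‹Nonempty W›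
  have hlam : 0 ≤ lam := by
    have h1 : 0 ≤ (B.mulVec y) i₀ := Finset.sum_nonneg fun j _ =>
      mul_nonneg (hB _ _) (hy j).le
    rw [heig] at h1
    simp only [Pi.smul_apply, smul_eq_mul] at h1
    exact (mul_nonneg_iff_of_pos_right (hy i₀)).mp h1
  set M : Matrix W W ℂ := B.map (Complex.ofReal : ℝ → ℂ) with hM
  have hMv : ∀ z : W → ℂ, M.mulVec z = fun i => ∑ j, (B i j : ℂ) * z j := by
    intro z; funext i
    simp [Matrix.mulVec, dotProduct, hM, Matrix.map_apply]
  -- membership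
  have hmem : (lam : ℂ) ∈ spectrum ℂ M := by
    rw [spectrum.mem_iff]
    rw [Matrix.isUnit_iff_isUnit_det, isUnit_iff_ne_zero, not_ne_iff,
      ← Matrix.exists_mulVec_eq_zero_iff]
    refine ⟨fun i => (y i : ℂ), ?_, ?_⟩
    · intro h
      have := congrFun h i₀
      simp only [Pi.zero_apply, Complex.ofReal_eq_zero] at this
      exact (hy i₀).ne' this
    · funext i
      have h2 := congrFun heig i
      simp only [Matrix.mulVec, dotProduct, Pi.smul_apply, smul_eq_mul] at h2
      simp only [Matrix.sub_mulVec, Pi.sub_apply, Matrix.algebraMap_eq_diagonal,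
        Matrix.mulVec_diagonal, Pi.algebraMap_apply, Algebra.algebraMap_self, RingHom.id_apply,
        hMv, Pi.zero_apply, sub_eq_zero]
      have h3 : ∑ j, ((B i j : ℂ)) * (y j : ℂ) = ((∑ j, B i j * y j : ℝ) : ℂ) := by
        push_cast; rfl
      rw [h3, h2]
      push_cast; ring
  -- bound
  have hbound : ∀ μ ∈ spectrum ℂ M, ‖μ‖ ≤ lam := by
    intro μ hμ
    rw [spectrum.mem_iff, Matrix.isUnit_iff_isUnit_det, isUnit_iff_ne_zero, not_ne_iff,
      ← Matrix.exists_mulVec_eq_zero_iff] at hμ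
    obtain ⟨z, hz0, hz⟩ := hμ
    have hzeig : ∀ i, μ * z i = ∑ j, (B i j : ℂ) * z j := by
      intro i
      have := congrFun hz i
      simp [Matrix.sub_mulVec, Matrix.algebraMap_eq_diagonal, Matrix.mulVec_diagonal,
        hMv, sub_eq_zero] at this
      exact this
    obtain ⟨i₁, -, hi₁⟩ := Finset.exists_max_image Finset.univ
      (fun i => ‖z i‖ / y i) Finset.univ_nonempty
    set c := ‖z i₁‖ / y i₁ with hc
    have hcb : ∀ j, ‖z j‖ ≤ c * y j := by
      intro j
      have := hi₁ j (Finset.mem_univ j)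
      rw [div_le_div_iff₀ (hy j) (hy i₁)] at this
      rw [hc, div_mul_eq_mul_div, le_div_iff₀ (hy i₁)]
      linarith [this]
    have hcpos : 0 < c := by
      obtain ⟨j, hj⟩ : ∃ j, z j ≠ 0 := by
        by_contra h; push_neg at h; exact hz0 (funext fun j => h j)
      have : 0 < ‖z j‖ := norm_pos_iff.mpr hj
      have h2 := hi₁ j (Finset.mem_univ j)
      exact lt_of_lt_of_le (div_pos this (hy j)) h2
    have hzi₁ : ‖z i₁‖ = c * y i₁ := by
      rw [hc, div_mul_eq_mul_div, mul_div_assoc, div_self (hy i₁).ne', mul_one]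
    have key : ‖μ‖ * ‖z i₁‖ ≤ lam * ‖z i₁‖ := by
      have h3 : ‖μ * z i₁‖ ≤ ∑ j, B i₁ j * ‖z j‖ := by
        rw [hzeig i₁]
        refine (norm_sum_le _ _).trans ?_
        apply Finset.sum_le_sum
        intro j _
        rw [norm_mul, Complex.norm_real, Real.norm_of_nonneg (hB i₁ j)]
      have h4 : ∑ j, B i₁ j * ‖z j‖ ≤ ∑ j, B i₁ j * (c * y j) :=
        Finset.sum_le_sum fun j _ => mul_le_mul_of_nonneg_left (hcb j) (hB i₁ j)
      have h5 : ∑ j, B i₁ j * (c * y j) = c * (B.mulVec y) i₁ := by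
        rw [Matrix.mulVec, dotProduct, Finset.mul_sum]; congr 1; funext j; ring
      rw [norm_mul] at h3
      calc ‖μ‖ * ‖z i₁‖ ≤ c * (B.mulVec y) i₁ := by rw [← h5]; exact h3.trans h4
        _ = c * (lam * y i₁) := by rw [heig]; simp
        _ = lam * ‖z i₁‖ := by rw [hzi₁]; ring
    have hzi₁pos : 0 < ‖z i₁‖ := by rw [hzi₁]; exact mul_pos hcpos (hy i₁)
    exact le_of_mul_le_mul_right key hzi₁pos
  -- conclude
  have hne : lam ∈ (fun μ : ℂ => ‖μ‖) '' spectrum ℂ M := by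
    refine ⟨(lam : ℂ), hmem, ?_⟩
    simp [Real.norm_of_nonneg hlam]
  refine le_antisymm ?_ ?_
  · apply csSup_le ⟨lam, hne⟩
    rintro r ⟨μ, hμ, rfl⟩
    exact hbound μ hμ
  · apply le_csSup ⟨lam, ?_⟩ hne
    rintro r ⟨μ, hμ, rfl⟩
    exact hbound μ hμ

end SR

section Basic
variable {W : Type*} [Fintype W] [DecidableEq W]

lemma pow_entry_nonneg (B : Matrix W W ℝ) (hB : ∀ i j, 0 ≤ B i j) (k : ℕ) :
    ∀ i j, 0 ≤ (B ^ k) i j := by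
  induction k with
  | zero => intro i j; rw [pow_zero]; by_cases h : i = j <;> simp [Matrix.one_apply, h]
  | succ n ih =>
    intro i j
    rw [pow_succ, Matrix.mul_apply]
    exact Finset.sum_nonneg fun m _ => mul_nonneg (ih i m) (hB m j)

lemma pow_entry_le_onePlus (B : Matrix W W ℝ) (hB : ∀ i j, 0 ≤ B i j) (k : ℕ) :
    ∀ i j, (B ^ k) i j ≤ ((1 + B) ^ k) i j := by
  induction k with
  | zero => intro i j; rfl
  | succ n ih =>
    intro i j
    rw [pow_succ, pow_succ, mul_add, mul_one, Matrix.add_apply, Matrix.mul_apply,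
      Matrix.mul_apply]
    have h1 : ∑ m, (B ^ n) i m * B m j ≤ ∑ m, ((1 + B) ^ n) i m * B m j :=
      Finset.sum_le_sum fun m _ => mul_le_mul_of_nonneg_right (ih i m) (hB m j)
    have h2 : 0 ≤ ((1 + B) ^ n) i j := le_trans (pow_entry_nonneg B hB n i j) (ih i j)
    linarith

lemma onePlus_pow_mono (B : Matrix W W ℝ) (hB : ∀ i j, 0 ≤ B i j) {k l : ℕ} (hkl : k ≤ l) :
    ∀ i j, ((1 + B) ^ k) i j ≤ ((1 + B) ^ l) i j := by
  have hstep : ∀ (n : ℕ) (i j : W), ((1 + B) ^ n) i j ≤ ((1 + B) ^ (n + 1)) i j := by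
    intro n i j
    have hnn : ∀ i j, 0 ≤ ((1 + B) ^ n) i j := fun i j =>
      le_trans (pow_entry_nonneg B hB n i j) (pow_entry_le_onePlus B hB n i j)
    rw [pow_succ, mul_add, mul_one, Matrix.add_apply, Matrix.mul_apply]
    have : 0 ≤ ∑ m, ((1 + B) ^ n) i m * B m j :=
      Finset.sum_nonneg fun m _ => mul_nonneg (hnn i m) (hB m j)
    linarith
  intro i j
  induction hkl with
  | refl => exact le_refl _
  | step h ih => exact le_trans ih (hstep _ i j)

end Basic

section Perron
variable {W : Type*} [Fintype W] [DecidableEq W] [Nonempty W]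

/-- For an irreducible nonnegative matrix, some power of `1 + B` has all entries positive. -/
lemma exists_onePlus_pow_pos (B : Matrix W W ℝ) (hB : ∀ i j, 0 ≤ B i j)
    (hirr : MatIrreducible B) :
    ∃ N : ℕ, ∀ i j, 0 < ((1 + B) ^ N) i j := by
  choose k hk1 hkpos using hirr
  refine ⟨Finset.univ.sup (fun p : W × W => k p.1 p.2), fun i j => ?_⟩
  have hle : k i j ≤ Finset.univ.sup (fun p : W × W => k p.1 p.2) :=
    Finset.le_sup (f := fun p : W × W => k p.1 p.2) (Finset.mem_univ (i, j))
  calc (0 : ℝ) < (B ^ k i j) i j := hkpos i j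
    _ ≤ ((1 + B) ^ k i j) i j := pow_entry_le_onePlus B hB _ i j
    _ ≤ _ := onePlus_pow_mono B hB hle i j

lemma mulVec_pos_of_pos (P : Matrix W W ℝ) (hP : ∀ i j, 0 < P i j)
    (x : W → ℝ) (hx : ∀ i, 0 ≤ x i) (hx0 : x ≠ 0) : ∀ i, 0 < P.mulVec x i := by
  obtain ⟨j₀, hj₀⟩ : ∃ j, 0 < x j := by
    by_contra h; push_neg at h
    exact hx0 (funext fun j => le_antisymm (h j) (hx j))
  intro i
  have : P i j₀ * x j₀ ≤ ∑ j, P i j * x j :=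
    Finset.single_le_sum (f := fun j => P i j * x j)
      (fun j _ => mul_nonneg (hP i j).le (hx j)) (Finset.mem_univ j₀)
  exact lt_of_lt_of_le (mul_pos (hP i j₀) hj₀) this

/-- Perron-Frobenius existence for irreducible nonnegative matrices. -/
lemma perron_exists (B : Matrix W W ℝ) (hB : ∀ i j, 0 ≤ B i j)
    (hirr : MatIrreducible B) :
    ∃ (x : W → ℝ) (s : ℝ), (∀ i, 0 < x i) ∧ 0 ≤ s ∧ B.mulVec x = s • x := by
  classical
  obtain ⟨N, hN⟩ := exists_onePlus_pow_pos B hB hirr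
  set P := (1 + B) ^ N with hPdef
  set Mb : ℝ := ∑ i, ∑ j, B i j with hMb
  have hMb0 : 0 ≤ Mb := Finset.sum_nonneg fun i _ => Finset.sum_nonneg fun j _ => hB i j
  set Φ : Set ℝ := {t | 0 ≤ t ∧ ∃ x : W → ℝ, (∀ i, 0 ≤ x i) ∧ (∑ i, x i = 1) ∧
    ∀ i, t * x i ≤ B.mulVec x i} with hΦ
  -- the uniform vector
  set u : W → ℝ := fun _ => ((Fintype.card W : ℝ))⁻¹ with hu
  have hcard : (0 : ℝ) < (Fintype.card W : ℝ) := by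
    exact_mod_cast Fintype.card_pos
  have husum : ∑ i, u i = 1 := by
    simp [hu, Finset.sum_const, Finset.card_univ]
  have h0Φ : (0 : ℝ) ∈ Φ := by
    refine ⟨le_refl 0, u, fun i => by positivity, husum, fun i => ?_⟩
    rw [zero_mul]
    exact Finset.sum_nonneg fun j _ => mul_nonneg (hB i j) (by positivity)
  -- upper bound
  have hub : ∀ t ∈ Φ, t ≤ Mb := by
    rintro t ⟨ht0, x, hx0, hx1, hxt⟩
    have hxle1 : ∀ j, x j ≤ 1 := by
      intro j
      rw [← hx1]
      exact Finset.single_le_sum (fun i _ => hx0 i) (Finset.mem_univ j)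
    calc t = t * ∑ i, x i := by rw [hx1, mul_one]
      _ = ∑ i, t * x i := by rw [Finset.mul_sum]
      _ ≤ ∑ i, B.mulVec x i := Finset.sum_le_sum fun i _ => hxt i
      _ = ∑ i, ∑ j, B i j * x j := rfl
      _ ≤ ∑ i, ∑ j, B i j := by
          refine Finset.sum_le_sum fun i _ => Finset.sum_le_sum fun j _ => ?_
          calc B i j * x j ≤ B i j * 1 :=
            mul_le_mul_of_nonneg_left (hxle1 j) (hB i j)
          _ = B i j := mul_one _
  -- Φ is closed
  have hclosed : IsClosed Φ := by
    set E : Set (ℝ × (W → ℝ)) := {p | 0 ≤ p.1 ∧ p.1 ≤ Mb ∧ (∀ i, 0 ≤ p.2 i) ∧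
      (∑ i, p.2 i = 1) ∧ ∀ i, p.1 * p.2 i ≤ B.mulVec p.2 i} with hE
    have hEclosed : IsClosed E := by
      have hEeq : E = {p : ℝ × (W → ℝ) | 0 ≤ p.1} ∩ {p | p.1 ≤ Mb} ∩
          (⋂ i, {p : ℝ × (W → ℝ) | 0 ≤ p.2 i}) ∩ {p | ∑ i, p.2 i = 1} ∩
          ⋂ i, {p : ℝ × (W → ℝ) | p.1 * p.2 i ≤ ∑ j, B i j * p.2 j} := by
        ext p
        simp only [hE, Set.mem_setOf_eq, Set.mem_inter_iff, Set.mem_iInter]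
        constructor
        · rintro ⟨h1, h2, h3, h4, h5⟩; exact ⟨⟨⟨⟨h1, h2⟩, h3⟩, h4⟩, h5⟩
        · rintro ⟨⟨⟨⟨h1, h2⟩, h3⟩, h4⟩, h5⟩; exact ⟨h1, h2, h3, h4, h5⟩
      rw [hEeq]
      refine IsClosed.inter (IsClosed.inter (IsClosed.inter (IsClosed.inter ?_ ?_) ?_) ?_) ?_
      · exact isClosed_le continuous_const continuous_fst
      · exact isClosed_le continuous_fst continuous_const
      · exact isClosed_iInter fun i => isClosed_le continuous_const
          ((continuous_apply i).comp continuous_snd)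
      · exact isClosed_eq (continuous_finset_sum _ fun i _ =>
          (continuous_apply i).comp continuous_snd) continuous_const
      · exact isClosed_iInter fun i => isClosed_le
          (continuous_fst.mul ((continuous_apply i).comp continuous_snd))
          (continuous_finset_sum _ fun j _ =>
            continuous_const.mul ((continuous_apply j).comp continuous_snd))
    have hEsub : E ⊆ Set.Icc (0 : ℝ) Mb ×ˢ Set.Icc (0 : W → ℝ) 1 := by
      rintro ⟨t, x⟩ ⟨ht0, htM, hx0, hx1, -⟩
      refine ⟨⟨ht0, htM⟩, fun i => hx0 i, fun i => ?_⟩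
      simp only [Pi.one_apply]
      rw [← hx1]
      exact Finset.single_le_sum (fun j _ => hx0 j) (Finset.mem_univ i)
    have hEcompact : IsCompact E := by
      refine IsCompact.of_isClosed_subset ?_ hEclosed hEsub
      refine IsCompact.prod isCompact_Icc ?_
      rw [← Set.pi_univ_Icc]
      exact isCompact_univ_pi fun i => isCompact_Icc
    have hΦeq : Φ = Prod.fst '' E := by
      ext t
      constructor
      · rintro ht
        obtain ⟨ht0, x, hx0, hx1, hxt⟩ := ht
        exact ⟨(t, x), ⟨ht0, hub t ⟨ht0, x, hx0, hx1, hxt⟩, hx0, hx1, hxt⟩, rfl⟩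
      · rintro ⟨⟨t', x⟩, ⟨ht0, -, hx0, hx1, hxt⟩, rfl⟩
        exact ⟨ht0, x, hx0, hx1, hxt⟩
    rw [hΦeq]
    exact (hEcompact.image continuous_fst).isClosed
  -- the supremum
  set s := sSup Φ with hs
  have hsΦ : s ∈ Φ := hclosed.csSup_mem ⟨0, h0Φ⟩ ⟨Mb, hub⟩
  obtain ⟨hs0, x, hx0, hx1, hxt⟩ := hsΦ
  have hxne : x ≠ 0 := by
    intro h
    rw [h] at hx1
    simp at hx1
  have hPentry : ∀ i j, 0 ≤ P i j := fun i j => (hN i j).le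
  -- claim the eigen equation
  have heig : B.mulVec x = s • x := by
    by_contra hne
    set y : W → ℝ := B.mulVec x - s • x with hy
    have hy0 : ∀ i, 0 ≤ y i := fun i => by
      simp only [hy, Pi.sub_apply, Pi.smul_apply, smul_eq_mul]
      linarith [hxt i]
    have hyne : y ≠ 0 := fun h => hne (by rw [← sub_eq_zero]; exact h)
    set z := P.mulVec x with hz
    have hzpos : ∀ i, 0 < z i := mulVec_pos_of_pos P hN x hx0 hxne
    have hPy : ∀ i, 0 < P.mulVec y i := mulVec_pos_of_pos P hN y hy0 hyne
    have hcomm : B * P = P * B :=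
      ((Commute.one_right B).add_right (Commute.refl B)).pow_right N
    have hBz : B.mulVec z = s • z + P.mulVec y := by
      have h1 : B.mulVec (P.mulVec x) = P.mulVec (B.mulVec x) := by
        rw [Matrix.mulVec_mulVec, Matrix.mulVec_mulVec, hcomm]
      have h2 : P.mulVec y = P.mulVec (B.mulVec x) - s • P.mulVec x := by
        rw [hy, Matrix.mulVec_sub]
        congr 1
        rw [Matrix.mulVec_smul]
      rw [hz, h1, h2]
      abel
    -- find eps
    set ε := Finset.univ.inf' Finset.univ_nonempty (fun i => P.mulVec y i / z i) with hε
    have hεpos : 0 < ε := by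
      rw [hε, Finset.lt_inf'_iff]
      exact fun i _ => div_pos (hPy i) (hzpos i)
    have hεz : ∀ i, (s + ε) * z i ≤ B.mulVec z i := by
      intro i
      have h1 : ε ≤ P.mulVec y i / z i := Finset.inf'_le _ (Finset.mem_univ i)
      have h2 : ε * z i ≤ P.mulVec y i := (le_div_iff₀ (hzpos i)).mp h1
      have := congrFun hBz i
      simp only [Pi.add_apply, Pi.smul_apply, smul_eq_mul] at this
      rw [this]
      nlinarith [hzpos i]
    -- normalize z
    set c : ℝ := ∑ i, z i with hc
    have hcpos : 0 < c := Finset.sum_pos (fun i _ => hzpos i) Finset.univ_nonempty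
    have hmem : s + ε ∈ Φ := by
      refine ⟨by linarith, fun i => c⁻¹ * z i, fun i => mul_nonneg (inv_nonneg.mpr hcpos.le) (hzpos i).le, ?_, fun i => ?_⟩
      · rw [← Finset.mul_sum, ← hc, inv_mul_cancel₀ hcpos.ne']
      · have : B.mulVec (fun i => c⁻¹ * z i) i = c⁻¹ * B.mulVec z i := by
          simp only [Matrix.mulVec, dotProduct, Finset.mul_sum]
          congr 1; funext j; ring
        rw [this]
        have := hεz i
        nlinarith [inv_pos.mpr hcpos]
    have : s + ε ≤ s := le_csSup ⟨Mb, hub⟩ hmem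
    linarith
  -- positivity of x
  have hPx : P.mulVec x = ((1 + s) ^ N) • x := by
    have h1 : (1 + B).mulVec x = (1 + s) • x := by
      rw [Matrix.add_mulVec, Matrix.one_mulVec, heig]
      funext i; simp; ring
    clear_value P
    rw [hPdef]
    clear hPdef hN hPentry
    induction N with
    | zero => simp [Matrix.one_mulVec]
    | succ n ih =>
      rw [pow_succ, ← Matrix.mulVec_mulVec, h1, Matrix.mulVec_smul, ih, pow_succ]
      rw [smul_smul, mul_comm]
  have hxpos : ∀ i, 0 < x i := by
    intro i
    have h1 : 0 < P.mulVec x i := mulVec_pos_of_pos P hN x hx0 hxne i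
    rw [hPx] at h1
    simp only [Pi.smul_apply, smul_eq_mul] at h1
    have h2 : (0:ℝ) < (1 + s) ^ N := by positivity
    nlinarith
  exact ⟨x, s, hxpos, hs0, heig⟩

end Perron

section Helper2
variable {W : Type*} [Fintype W] [DecidableEq W]

lemma pow_entry_prod_le (M : Matrix W W ℝ) (hM : ∀ i j, 0 ≤ M i j) (a b : ℕ) (i m j : W) :
    (M ^ a) i m * (M ^ b) m j ≤ (M ^ (a + b)) i j := by
  rw [pow_add, Matrix.mul_apply]
  exact Finset.single_le_sum
    (f := fun l => (M ^ a) i l * (M ^ b) l j)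
    (fun l _ => mul_nonneg (pow_entry_nonneg M hM a i l) (pow_entry_nonneg M hM b l j))
    (Finset.mem_univ m)

end Helper2

theorem stmt0 {V : Type*} [Fintype V] [DecidableEq V] [Nonempty V]
    (A : Matrix V V ℝ) (hA : ∀ i j, 0 ≤ A i j) (lam : ℝ) :
    isComplEig A lam ↔
      ∃ S : Finset V, S.Nonempty ∧
        (MatIrreducible (psub A S) ∨ psub A S = 0) ∧ lam = specRad (psub A S) := by
  classical
  constructor
  · rintro ⟨x, hxne, hx0, hw0, hsum⟩
    have hx0' : ∀ i, 0 ≤ x i := fun i => hx0 i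
    set w : V → ℝ := A.mulVec x - lam • x with hw
    have hw0' : ∀ i, 0 ≤ w i := fun i => hw0 i
    have hterm : ∀ i, x i * w i = 0 := by
      have h := (Finset.sum_eq_zero_iff_of_nonneg
        (fun i _ => mul_nonneg (hx0' i) (hw0' i))).mp hsum
      exact fun i => h i (Finset.mem_univ i)
    set T : Finset V := Finset.univ.filter (fun i => 0 < x i) with hT
    have hmemT : ∀ i, i ∈ T ↔ 0 < x i := by intro i; simp [hT]
    have hTne : T.Nonempty := by
      obtain ⟨i, hi⟩ : ∃ i, x i ≠ 0 := by
        by_contra h; push_neg at h; exact hxne (funext h)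
      exact ⟨i, (hmemT i).mpr (lt_of_le_of_ne (hx0' i) (Ne.symm hi))⟩
    have heq : ∀ i ∈ T, (A.mulVec x) i = lam * x i := by
      intro i hi
      have hxi : 0 < x i := (hmemT i).mp hi
      have h2 : w i = 0 := by
        rcases mul_eq_zero.mp (hterm i) with h | h
        · exact absurd h hxi.ne'
        · exact h
      simp only [hw, Pi.sub_apply, Pi.smul_apply, smul_eq_mul] at h2
      linarith
    have hxzero : ∀ i, i ∉ T → x i = 0 := by
      intro i hi
      by_contra h
      exact hi ((hmemT i).mpr (lt_of_le_of_ne (hx0' i) (Ne.symm h)))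
    set Step : V → V → Prop := fun i j => i ∈ T ∧ j ∈ T ∧ 0 < A i j with hStep
    set Reach := Relation.ReflTransGen Step with hReach
    set R : V → Finset V := fun i => Finset.univ.filter (fun j => Reach i j) with hR
    have hmemR : ∀ i j, j ∈ R i ↔ Reach i j := by intro i j; simp [hR]
    obtain ⟨i₀, hi₀T, hi₀min⟩ := Finset.exists_min_image T (fun i => (R i).card) hTne
    set C := R i₀ with hC
    have hi₀C : i₀ ∈ C := (hmemR i₀ i₀).mpr Relation.ReflTransGen.refl
    have hCT : C ⊆ T := by
      intro j hj
      rcases Relation.ReflTransGen.cases_tail ((hmemR i₀ j).mp hj) with h | ⟨m, _, hstep⟩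
      · rw [h]; exact hi₀T
      · exact hstep.2.1
    have hRC : ∀ i ∈ C, R i = C := by
      intro i hi
      have hsub : R i ⊆ C := by
        intro j hj
        exact (hmemR i₀ j).mpr (((hmemR i₀ i).mp hi).trans ((hmemR i j).mp hj))
      exact Finset.eq_of_subset_of_card_le hsub (hi₀min i (hCT hi))
    have hclosedC : ∀ i ∈ C, ∀ j, Step i j → j ∈ C := by
      intro i hi j hstep
      exact (hmemR i₀ j).mpr (Relation.ReflTransGen.tail ((hmemR i₀ i).mp hi) hstep)
    have hCne : C.Nonempty := ⟨i₀, hi₀C⟩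
    haveI : Nonempty ↥C := ⟨⟨i₀, hi₀C⟩⟩
    set B := psub A C with hB
    have hBnn : ∀ i j : ↥C, 0 ≤ B i j := fun i j => hA i.val j.val
    set y : ↥C → ℝ := fun j => x j.val with hy
    have hypos : ∀ j, 0 < y j := fun j => (hmemT j.val).mp (hCT j.2)
    have heigC : B.mulVec y = lam • y := by
      funext i
      have hiT : i.val ∈ T := hCT i.2
      have h1 : (B.mulVec y) i = ∑ j ∈ C.attach, A i.val j.val * x j.val := by
        simp only [Matrix.mulVec, dotProduct, hB, psub, Matrix.submatrix_apply, hy]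
        rw [Finset.univ_eq_attach]
      have h2 : ∑ j ∈ C.attach, A i.val j.val * x j.val = ∑ j ∈ C, A i.val j * x j :=
        Finset.sum_attach C (fun j => A i.val j * x j)
      have h3 : ∑ j ∈ C, A i.val j * x j = ∑ j, A i.val j * x j := by
        apply Finset.sum_subset (Finset.subset_univ C)
        intro j _ hj
        by_cases hjT : j ∈ T
        · have hnl : ¬ (0 < A i.val j) := fun hpos => hj (hclosedC i.val i.2 j ⟨hiT, hjT, hpos⟩)
          rw [le_antisymm (not_lt.mp hnl) (hA _ _), zero_mul]
        · rw [hxzero j hjT, mul_zero]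
      rw [h1, h2, h3]
      exact heq i.val hiT
    by_cases hzero : ∀ p ∈ C, ∀ q ∈ C, A p q = 0
    · refine ⟨C, hCne, Or.inr ?_, ?_⟩
      · rw [← hB]; ext i j; exact hzero i.val i.2 j.val j.2
      · rw [← hB]; exact (specRad_eq_of_posEigen B hBnn y hypos lam heigC).symm
    · push_neg at hzero
      obtain ⟨p, hp, q, hq, hpq⟩ := hzero
      have hpq' : 0 < A p q := lt_of_le_of_ne (hA p q) (Ne.symm hpq)
      have hreach : ∀ (i : ↥C) (b : V), Reach i.val b → ∀ (hbC : b ∈ C),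
          ∃ k : ℕ, 0 < (B ^ k) i ⟨b, hbC⟩ := by
        intro i b hb
        induction hb with
        | refl =>
          intro hbC
          refine ⟨0, ?_⟩
          rw [pow_zero]
          have he : (⟨i.val, hbC⟩ : ↥C) = i := Subtype.coe_eta i hbC
          rw [he, Matrix.one_apply_eq]
          norm_num
        | @tail b c hab hbc ih =>
          intro hcC
          have hbC : b ∈ C := (hmemR i₀ b).mpr (((hmemR i₀ i.val).mp i.2).trans hab)
          obtain ⟨k, hk⟩ := ih hbC
          refine ⟨k + 1, ?_⟩
          have hle := pow_entry_prod_le B hBnn k 1 i ⟨b, hbC⟩ ⟨c, hcC⟩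
          rw [pow_one] at hle
          have hBbc : 0 < B ⟨b, hbC⟩ ⟨c, hcC⟩ := hbc.2.2
          exact lt_of_lt_of_le (mul_pos hk hBbc) hle
      refine ⟨C, hCne, Or.inl ?_, ?_⟩
      · rw [← hB]
        intro i j
        have hip : Reach i.val p := (hmemR i.val p).mp (by rw [hRC i.val i.2]; exact hp)
        obtain ⟨k1, hk1⟩ := hreach i p hip hp
        have hqj : Reach q j.val := (hmemR q j.val).mp (by rw [hRC q hq]; exact j.2)
        obtain ⟨k2, hk2⟩ := hreach ⟨q, hq⟩ j.val hqj j.2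
        refine ⟨k1 + 1 + k2, by omega, ?_⟩
        have h1 : 0 < (B ^ (k1 + 1)) i ⟨q, hq⟩ := by
          have hle := pow_entry_prod_le B hBnn k1 1 i ⟨p, hp⟩ ⟨q, hq⟩
          rw [pow_one] at hle
          exact lt_of_lt_of_le (mul_pos hk1 hpq') hle
        have h2 := pow_entry_prod_le B hBnn (k1 + 1) k2 i ⟨q, hq⟩ j
        have hk2' : 0 < (B ^ k2) ⟨q, hq⟩ j := by
          have he : (⟨j.val, j.2⟩ : ↥C) = j := Subtype.coe_eta j j.2
          rwa [he] at hk2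
        exact lt_of_lt_of_le (mul_pos h1 hk2') h2
      · rw [← hB]; exact (specRad_eq_of_posEigen B hBnn y hypos lam heigC).symm
  · rintro ⟨S, hSne, halt, hlam⟩
    haveI : Nonempty ↥S := ⟨⟨hSne.choose, hSne.choose_spec⟩⟩
    set B := psub A S with hB
    have hBnn : ∀ i j : ↥S, 0 ≤ B i j := fun i j => hA _ _
    rcases halt with hirr | h0
    · obtain ⟨y, s, hypos, hs0, heig⟩ := perron_exists B hBnn hirr
      have hsr : specRad B = s := specRad_eq_of_posEigen B hBnn y hypos s heig
      have hlam' : lam = s := by rw [hlam, hsr]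
      set x : V → ℝ := fun i => if h : i ∈ S then y ⟨i, h⟩ else 0 with hx
      have hxS : ∀ (i) (hi : i ∈ S), x i = y ⟨i, hi⟩ := fun i hi => by
        rw [hx]; dsimp only; rw [dif_pos hi]
      have hxout : ∀ i, i ∉ S → x i = 0 := fun i hi => by
        rw [hx]; dsimp only; rw [dif_neg hi]
      have hx0 : ∀ i, 0 ≤ x i := by
        intro i
        by_cases hi : i ∈ S
        · rw [hxS i hi]; exact (hypos _).le
        · rw [hxout i hi]
      have hmv : ∀ (i : V), i ∈ S → ∀ (hi : i ∈ S), (A.mulVec x) i = (B.mulVec y) ⟨i, hi⟩ := by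
        intro i _ hi
        have h2 : ∑ j, A i j * x j = ∑ j ∈ S, A i j * x j :=
          (Finset.sum_subset (Finset.subset_univ S)
            (fun j _ hj => by rw [hxout j hj, mul_zero])).symm
        have h3 : ∑ j ∈ S, A i j * x j = ∑ j ∈ S.attach, A i j.val * x j.val :=
          (Finset.sum_attach S _).symm
        have h4 : ∑ j ∈ S.attach, A i j.val * x j.val = ∑ j ∈ S.attach, A i j.val * y j :=
          Finset.sum_congr rfl (fun j _ => by rw [hxS j.val j.2])
        show ∑ j, A i j * x j = _
        rw [h2, h3, h4]
        simp only [Matrix.mulVec, dotProduct, hB, psub, Matrix.submatrix_apply,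
          Finset.univ_eq_attach]
      have hweq : ∀ (i) (hi : i ∈ S), (A.mulVec x - lam • x) i = 0 := by
        intro i hi
        have h5 := hmv i hi hi
        rw [heig] at h5
        simp only [Pi.sub_apply, Pi.smul_apply, smul_eq_mul]
        rw [h5, hxS i hi, hlam']
        simp
      obtain ⟨i₁, hi₁⟩ := hSne
      refine ⟨x, ?_, ?_, ?_, ?_⟩
      · intro h
        have := congrFun h i₁
        rw [hxS i₁ hi₁] at this
        exact (hypos ⟨i₁, hi₁⟩).ne' this
      · intro i; exact hx0 i
      · intro i
        by_cases hi : i ∈ S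
        · rw [hweq i hi]; simp
        · show (0:ℝ) ≤ (A.mulVec x) i - lam * x i
          rw [hxout i hi, mul_zero, sub_zero]
          exact Finset.sum_nonneg fun j _ => mul_nonneg (hA i j) (hx0 j)
      · apply Finset.sum_eq_zero
        intro i _
        by_cases hi : i ∈ S
        · rw [hweq i hi, mul_zero]
        · rw [hxout i hi, zero_mul]
    · have hsr0 : specRad B = 0 := by
        apply specRad_eq_of_posEigen B hBnn (fun _ => 1) (fun _ => one_pos)
        rw [h0]
        funext i
        simp [Matrix.mulVec]
      have hlam0 : lam = 0 := by rw [hlam, hsr0]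
      set x : V → ℝ := fun i => if i ∈ S then 1 else 0 with hx
      have hx0 : ∀ i, 0 ≤ x i := by
        intro i; rw [hx]; dsimp only; split <;> norm_num
      have hxout : ∀ i, i ∉ S → x i = 0 := fun i hi => by
        rw [hx]; dsimp only; rw [if_neg hi]
      have hAx : ∀ i ∈ S, (A.mulVec x) i = 0 := by
        intro i hi
        show ∑ j, A i j * x j = 0
        have h2 : ∑ j, A i j * x j = ∑ j ∈ S, A i j * x j :=
          (Finset.sum_subset (Finset.subset_univ S)
            (fun j _ hj => by rw [hxout j hj, mul_zero])).symm
        rw [h2]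
        apply Finset.sum_eq_zero
        intro j hj
        have : A i j = 0 := by
          have := congrFun (congrFun h0 ⟨i, hi⟩) ⟨j, hj⟩
          exact this
        rw [this, zero_mul]
      obtain ⟨i₁, hi₁⟩ := hSne
      refine ⟨x, ?_, ?_, ?_, ?_⟩
      · intro h
        have := congrFun h i₁
        rw [hx] at this
        simp [hi₁] at this
      · intro i; exact hx0 i
      · intro i
        show (0:ℝ) ≤ (A.mulVec x) i - lam * x i
        rw [hlam0, zero_mul, sub_zero]
        exact Finset.sum_nonneg fun j _ => mul_nonneg (hA i j) (hx0 j)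
      · apply Finset.sum_eq_zero
        intro i _
        by_cases hi : i ∈ S
        · show x i * ((A.mulVec x) i - lam * x i) = 0
          rw [hAx i hi, hlam0, zero_mul, sub_zero, mul_zero]
        · rw [hxout i hi, zero_mul]
end

section
/- Let A be an entrywise nonnegative real square matrix indexed by a finite type. Then the complementarity spectrum of A equals the complementarity spectrum of its transpose: Π(A) = Π(Aᵀ), i.e., a real number λ is a complementarity eigenvalue of A if and only if it is a complementarity eigenvalue of Aᵀ. -/
open Matrix Polynomial

lemma key_transfer {V : Type*} [Fintype V] (A : Matrix V V ℝ) (hA : ∀ i j, 0 ≤ A i j)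
    (lam : ℝ) (h : isComplEig A lam) : isComplEig Aᵀ lam := by
  classical
  obtain ⟨x, hx0, hxnn, hd, hsum⟩ := h
  have hxnn' : ∀ i, 0 ≤ x i := fun i => hxnn i
  have hmv : ∀ i, A.mulVec x i = ∑ j, A i j * x j := fun i => rfl
  have hterm : ∀ i, x i * (A.mulVec x - lam • x) i = 0 := by
    have h0 : ∀ i ∈ Finset.univ, x i * (A.mulVec x - lam • x) i = 0 := by
      rw [← Finset.sum_eq_zero_iff_of_nonneg]
      · exact hsum
      · intro i _; exact mul_nonneg (hxnn' i) (hd i)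
    intro i; exact h0 i (Finset.mem_univ i)
  have heq : ∀ i, x i ≠ 0 → A.mulVec x i = lam * x i := by
    intro i hi
    have h1 := hterm i
    rcases mul_eq_zero.mp h1 with h | h
    · exact absurd h hi
    · have h2 : A.mulVec x i - lam * x i = 0 := by
        simpa [Pi.sub_apply, smul_eq_mul] using h
      linarith
  have hxpos : ∀ i, x i ≠ 0 → 0 < x i := fun i hi => (hxnn' i).lt_of_ne (Ne.symm hi)
  obtain ⟨i0, hi0⟩ : ∃ i, x i ≠ 0 := by
    by_contra hcon; push_neg at hcon; exact hx0 (funext fun i => hcon i)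
  have hlam0 : 0 ≤ lam := by
    have h1 : 0 ≤ A.mulVec x i0 := by
      rw [hmv]
      exact Finset.sum_nonneg fun j _ => mul_nonneg (hA i0 j) (hxnn' j)
    have h2 := heq i0 hi0
    nlinarith [hxpos i0 hi0]
  -- helper: sums over the support subtype
  have hsub : ∀ (g : V → ℝ), (∀ j, x j = 0 → g j = 0) →
      ∑ j : {i // x i ≠ 0}, g j.1 = ∑ j, g j := by
    intro g hg
    rw [← Finset.sum_subtype (Finset.univ.filter fun i => x i ≠ 0) (by simp) g]
    exact Finset.sum_filter_of_ne fun j _ hj => fun hxj => hj (hg j hxj)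
  rcases eq_or_lt_of_le hlam0 with hlam | hlam
  · -- lam = 0 case
    have hAzero : ∀ i j, x i ≠ 0 → x j ≠ 0 → A i j = 0 := by
      intro i j hi hj
      have h1 : ∑ k, A i k * x k = 0 := by
        have := heq i hi; rw [hmv] at this; rw [this, ← hlam]; ring
      have h2 : ∀ k ∈ Finset.univ, A i k * x k = 0 := by
        rw [← Finset.sum_eq_zero_iff_of_nonneg]
        · exact h1
        · intro k _; exact mul_nonneg (hA i k) (hxnn' k)
      have := h2 j (Finset.mem_univ j)
      rcases mul_eq_zero.mp this with h | h
      · exact h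
      · exact absurd h hj
    refine ⟨x, hx0, hxnn, ?_, ?_⟩
    · intro i
      have : 0 ≤ Aᵀ.mulVec x i := by
        refine Finset.sum_nonneg fun j _ => mul_nonneg ?_ (hxnn' j)
        exact hA j i
      simp only [Pi.sub_apply, Pi.smul_apply, smul_eq_mul, ← hlam, Pi.zero_apply]
      simpa using this
    · refine Finset.sum_eq_zero fun i _ => ?_
      rcases eq_or_ne (x i) 0 with hi | hi
      · rw [hi]; ring
      · have : Aᵀ.mulVec x i = 0 := by
          refine Finset.sum_eq_zero fun j _ => ?_
          rcases eq_or_ne (x j) 0 with hj | hj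
          · simp [Matrix.transpose_apply, hj]
          · simp [Matrix.transpose_apply, hAzero j i hj hi]
        simp [Pi.sub_apply, this, ← hlam]
  · -- lam > 0 case
    set S := {i : V // x i ≠ 0} with hS
    have hSne : Nonempty S := ⟨⟨i0, hi0⟩⟩
    set C : Matrix S S ℝ := fun i j => A i.1 j.1 * x j.1 / (lam * x i.1) with hC
    have hCnn : ∀ i j, 0 ≤ C i j := by
      intro i j
      exact div_nonneg (mul_nonneg (hA i.1 j.1) (hxnn' j.1))
        (mul_nonneg hlam0 (hxnn' i.1))
    have hrow : ∀ i : S, ∑ j : S, C i j = 1 := by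
      intro i
      have h1 : ∑ j : S, A i.1 j.1 * x j.1 = lam * x i.1 := by
        rw [hsub (fun j => A i.1 j * x j) (fun j hj => by simp [hj])]
        rw [← hmv]; exact heq i.1 i.2
      have h2 : lam * x i.1 ≠ 0 := mul_ne_zero (ne_of_gt hlam) i.2
      simp only [hC]
      rw [← Finset.sum_div, h1, div_self h2]
    -- 1 is an eigenvalue of C, so there's a left eigenvector
    have hdet : (C - 1).det = 0 := by
      rw [← Matrix.exists_mulVec_eq_zero_iff]
      refine ⟨fun _ => 1, ?_, ?_⟩
      · intro hcon
        have := congrFun hcon (Classical.arbitrary S)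
        norm_num at this
      · funext i
        simp only [Matrix.sub_mulVec, Matrix.one_mulVec, Pi.sub_apply, Pi.zero_apply]
        have : (C *ᵥ fun _ => 1) i = ∑ j, C i j := by
          simp [Matrix.mulVec, dotProduct]
        rw [this, hrow i]; ring
    obtain ⟨w, hw0, hwC⟩ : ∃ w ≠ 0, w ᵥ* (C - 1) = 0 :=
      Matrix.exists_vecMul_eq_zero_iff.mpr hdet
    have hwfix : ∀ j : S, ∑ i : S, w i * C i j = w j := by
      intro j
      rw [Matrix.vecMul_sub, Matrix.vecMul_one] at hwC
      have h1 := congrFun hwC j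
      simp only [Pi.sub_apply, Pi.zero_apply, Matrix.vecMul, dotProduct] at h1
      linarith [h1]
    set z : S → ℝ := fun i => |w i| with hz
    have hzle : ∀ j : S, z j ≤ ∑ i : S, z i * C i j := by
      intro j
      calc z j = |∑ i : S, w i * C i j| := by rw [hwfix j]
        _ ≤ ∑ i : S, |w i * C i j| := Finset.abs_sum_le_sum_abs _ _
        _ = ∑ i : S, z i * C i j := by
            refine Finset.sum_congr rfl fun i _ => ?_
            rw [abs_mul, abs_of_nonneg (hCnn i j)]
    have hsumeq : ∑ j : S, (∑ i : S, z i * C i j) = ∑ j : S, z j := by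
      rw [Finset.sum_comm]
      refine Finset.sum_congr rfl fun i _ => ?_
      rw [← Finset.mul_sum, hrow i, mul_one]
    have hzfix : ∀ j : S, ∑ i : S, z i * C i j = z j := by
      intro j
      have := (Finset.sum_eq_sum_iff_of_le (fun j _ => hzle j)).mp hsumeq.symm
      exact (this j (Finset.mem_univ j)).symm
    -- the witness for Aᵀ
    set y : V → ℝ := fun i => if h : x i ≠ 0 then |w ⟨i, h⟩| / x i else 0 with hy
    have hynn : ∀ i, 0 ≤ y i := by
      intro i
      simp only [hy]
      split
      · exact div_nonneg (abs_nonneg _) (hxnn' i)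
      · exact le_refl 0
    have hyx : ∀ i, x i = 0 → y i = 0 := by
      intro i hi
      simp only [hy]
      rw [dif_neg (by simp [hi])]
    have hy0 : y ≠ 0 := by
      obtain ⟨j, hj⟩ : ∃ j : S, w j ≠ 0 := by
        by_contra hcon; push_neg at hcon; exact hw0 (funext fun j => hcon j)
      intro hcon
      have h1 : y j.1 = 0 := congrFun hcon j.1
      have h2 : y j.1 = |w j| / x j.1 := by
        simp only [hy]; rw [dif_pos j.2]
      rw [h2] at h1
      have := div_eq_zero_iff.mp h1
      rcases this with h | h
      · exact hj (abs_eq_zero.mp h)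
      · exact j.2 h
    have hkey : ∀ i : S, Aᵀ.mulVec y i.1 = lam * y i.1 := by
      intro i
      have hmvT : Aᵀ.mulVec y i.1 = ∑ j, A j i.1 * y j := by
        simp [Matrix.mulVec, dotProduct, Matrix.transpose_apply]
      rw [hmvT]
      rw [← hsub (fun j => A j i.1 * y j) (fun j hj => by simp [hyx j hj])]
      have hstep : ∀ j : S, A j.1 i.1 * y j.1 = (z j * C j i) * (lam / x i.1) := by
        intro j
        have hyj : y j.1 = |w j| / x j.1 := by
          simp only [hy]; rw [dif_pos j.2]
        rw [hyj]
        simp only [hz, hC]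
        have hxj := j.2
        have hxi := i.2
        have hl : lam ≠ 0 := ne_of_gt hlam
        field_simp
      rw [Finset.sum_congr rfl fun j _ => hstep j, ← Finset.sum_mul, hzfix i]
      have hyi : y i.1 = |w i| / x i.1 := by
        simp only [hy]; rw [dif_pos i.2]
      rw [hyi]
      simp only [hz]
      field_simp
    refine ⟨y, hy0, hynn, ?_, ?_⟩
    · intro i
      simp only [Pi.sub_apply, Pi.smul_apply, smul_eq_mul, Pi.zero_apply]
      rcases eq_or_ne (x i) 0 with hi | hi
      · have h1 : y i = 0 := hyx i hi
        have h2 : 0 ≤ Aᵀ.mulVec y i := by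
          refine Finset.sum_nonneg fun j _ => mul_nonneg ?_ (hynn j)
          exact hA j i
        rw [h1]; simpa using h2
      · rw [hkey ⟨i, hi⟩]; simp
    · refine Finset.sum_eq_zero fun i _ => ?_
      rcases eq_or_ne (x i) 0 with hi | hi
      · rw [hyx i hi]; ring
      · have := hkey ⟨i, hi⟩
        simp only [Pi.sub_apply, Pi.smul_apply, smul_eq_mul]
        rw [this]; ring

theorem stmt1 {V : Type*} [Fintype V] (A : Matrix V V ℝ) (hA : ∀ i j, 0 ≤ A i j) :
    {lam : ℝ | isComplEig A lam} = {lam : ℝ | isComplEig Aᵀ lam} := by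
  ext lam
  simp only [Set.mem_setOf_eq]
  constructor
  · exact key_transfer A hA lam
  · intro h
    have := key_transfer Aᵀ (fun i j => hA j i) lam h
    rwa [Matrix.transpose_transpose] at this
end

section
/- Let D be a finite simple digraph on a finite vertex type V. Then a real number λ is a complementarity eigenvalue of D if and only if there exists a strongly connected component C of D (an equivalence class of the mutual-reachability relation) such that λ is a complementarity eigenvalue of the induced subdigraph D[C]. In other words, Π(D) is the union of the complementarity spectra of the subdigraphs induced by the strongly connected components of D. -/
open Matrix Polynomial

-- Adjacency matrix of a digraph given by its arc relation.
open scoped Classical in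
noncomputable def adjMat {V : Type*} (adj : V → V → Prop) : Matrix V V ℝ :=
  Matrix.of fun i j => if adj i j then 1 else 0

/-- Mutual reachability via the reflexive-transitive closure of the arc relation. -/
def mutualReach {V : Type*} (adj : V → V → Prop) (u v : V) : Prop :=
  Relation.ReflTransGen adj u v ∧ Relation.ReflTransGen adj v u

-- The strongly connected component of the vertex `v`.
open scoped Classical in
noncomputable def sccOf {V : Type*} [Fintype V] (adj : V → V → Prop) (v : V) : Finset V :=
  Finset.univ.filter fun u => mutualReach adj u v

/-- Sum over the whole type equals sum over a subtype when the function vanishes outside. -/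
lemma sum_eq_sum_coe {V : Type*} [Fintype V] (C : Finset V) (f : V → ℝ)
    (h : ∀ j, j ∉ C → f j = 0) : ∑ j, f j = ∑ j : C, f j := by
  rw [Finset.sum_coe_sort C f]
  exact (Finset.sum_subset (Finset.subset_univ C) (fun j _ hj => h j hj)).symm

lemma adjMat_nonneg {V : Type*} (adj : V → V → Prop) (i j : V) : 0 ≤ adjMat adj i j := by
  classical
  simp only [adjMat, Matrix.of_apply]
  split <;> norm_num

theorem stmt3 {V : Type*} [Fintype V] (adj : V → V → Prop) (hirr : Irreflexive adj) (lam : ℝ) :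
    isComplEig (adjMat adj) lam ↔
      ∃ v : V, isComplEig (psub (adjMat adj) (sccOf adj v)) lam := by
  classical
  set A := adjMat adj with hA
  have hAnn : ∀ i j : V, 0 ≤ A i j := adjMat_nonneg adj
  constructor
  · rintro ⟨x, hx0, hxnn, hres, hcomp⟩
    -- each complementarity term vanishes
    have hterm : ∀ i, x i * (A.mulVec x - lam • x) i = 0 := by
      have := (Finset.sum_eq_zero_iff_of_nonneg
        (fun i _ => mul_nonneg (hxnn i) (hres i))).mp hcomp
      intro i; exact this i (Finset.mem_univ i)
    have heig : ∀ i, 0 < x i → A.mulVec x i = lam * x i := by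
      intro i hi
      rcases mul_eq_zero.mp (hterm i) with h' | h'
      · exact absurd h' (ne_of_gt hi)
      · have : A.mulVec x i - lam * x i = 0 := by
          simpa [Pi.sub_apply, Pi.smul_apply, smul_eq_mul] using h'
        linarith
    -- support of x
    set S : Finset V := Finset.univ.filter (fun i => 0 < x i) with hS
    have hmemS : ∀ i, i ∈ S ↔ 0 < x i := by intro i; simp [hS]
    have hSne : S.Nonempty := by
      by_contra h
      apply hx0
      funext i
      have hni : ¬ 0 < x i := fun hi => h ⟨i, (hmemS i).mpr hi⟩
      have : x i = 0 := le_antisymm (not_lt.mp hni) (hxnn i)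
      simpa using this
    -- reachability within the support
    set r : V → V → Prop := fun a b => adj a b ∧ a ∈ S ∧ b ∈ S with hr
    set Rel : V → V → Prop := fun a b => Relation.ReflTransGen r a b with hRel
    set R : V → Finset V := fun u => S.filter (Rel u) with hRdef
    obtain ⟨v, hvS, hvmin⟩ := S.exists_min_image (fun u => (R u).card) hSne
    -- v lies in a sink SCC of the support digraph
    have hsink : ∀ u ∈ S, Rel v u → Rel u v := by
      intro u huS hvu
      by_contra huv
      have hsub : R u ⊆ R v := by
        intro w hw
        simp only [hRdef, Finset.mem_filter] at hw ⊢
        exact ⟨hw.1, hvu.trans hw.2⟩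
      have hvin : v ∈ R v := by
        simp only [hRdef, Finset.mem_filter]
        exact ⟨hvS, Relation.ReflTransGen.refl⟩
      have hvnot : v ∉ R u := by
        simp only [hRdef, Finset.mem_filter, not_and]
        intro _; exact huv
      have hlt : (R u).card < (R v).card :=
        Finset.card_lt_card ((Finset.ssubset_iff_of_subset hsub).mpr ⟨v, hvin, hvnot⟩)
      exact absurd (hvmin u huS) (not_le.mpr hlt)
    have hvRv : v ∈ R v := by
      simp only [hRdef, Finset.mem_filter]
      exact ⟨hvS, Relation.ReflTransGen.refl⟩
    -- R v is closed under arcs into the support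
    have hclosed : ∀ i ∈ R v, ∀ j, adj i j → 0 < x j → j ∈ R v := by
      intro i hi j hadj hxj
      simp only [hRdef, Finset.mem_filter] at hi ⊢
      refine ⟨(hmemS j).mpr hxj, hi.2.tail ?_⟩
      exact ⟨hadj, hi.1, (hmemS j).mpr hxj⟩
    -- R v is contained in the SCC of v in the full digraph
    have hsubC : ∀ i ∈ R v, i ∈ sccOf adj v := by
      intro i hi
      simp only [hRdef, Finset.mem_filter] at hi
      have h1 : Relation.ReflTransGen adj v i := Relation.ReflTransGen.mono (r := r) (p := adj) (fun a b h => h.1) _ _ hi.2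
      have h2 : Relation.ReflTransGen adj i v :=
        Relation.ReflTransGen.mono (r := r) (p := adj) (fun a b h => h.1) _ _ (hsink i hi.1 hi.2)
      simp only [sccOf, Finset.mem_filter, Finset.mem_univ, true_and]
      exact ⟨h2, h1⟩
    -- key eigenvalue equation restricted to R v
    have hkey : ∀ i ∈ R v, ∑ j ∈ R v, A i j * x j = lam * x i := by
      intro i hi
      have hxi : 0 < x i := (hmemS i).mp (Finset.mem_filter.mp (by simpa [hRdef] using hi)).1
      have h1 : ∑ j, A i j * x j = lam * x i := by
        have := heig i hxi
        simpa [Matrix.mulVec, dotProduct] using this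
      rw [← h1]
      apply Finset.sum_subset (Finset.subset_univ _)
      intro j _ hj
      rcases lt_or_eq_of_le (hxnn j) with hxj | hxj
      · -- x j > 0; then adj i j would force j ∈ R v
        by_cases hadj : adj i j
        · exact absurd (hclosed i hi j hadj hxj) hj
        · simp [hA, adjMat, hadj]
      · simp [← hxj]
    refine ⟨v, fun j => if (j : V) ∈ R v then x j else 0, ?_, ?_, ?_, ?_⟩
    · -- nonzero
      intro h
      have hv : v ∈ sccOf adj v := hsubC v hvRv
      have := congrFun h ⟨v, hv⟩
      simp only [Pi.zero_apply, if_pos hvRv] at this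
      exact absurd this (ne_of_gt ((hmemS v).mp hvS))
    · intro j
      simp only [Pi.zero_apply]
      split
      · exact hxnn _
      · exact le_refl 0
    · intro i
      simp only [Pi.sub_apply, Pi.smul_apply, smul_eq_mul, Pi.zero_apply]
      have hmv : (psub A (sccOf adj v)).mulVec (fun j => if (j : V) ∈ R v then x j else 0) i
          = ∑ j ∈ R v, A i j * x j := by
        simp only [Matrix.mulVec, dotProduct, psub, Matrix.submatrix_apply]
        rw [Finset.sum_coe_sort (sccOf adj v)
          (fun j => A i j * (if j ∈ R v then x j else 0))]
        rw [← Finset.sum_subset (fun j hj => hsubC j hj)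
          (fun j _ hj => by simp [if_neg hj])]
        exact Finset.sum_congr rfl (fun j hj => by rw [if_pos hj])
      rw [hmv]
      by_cases hiR : (i : V) ∈ R v
      · rw [if_pos hiR, hkey i hiR]
        simp
      · rw [if_neg hiR]
        simp only [mul_zero, sub_zero]
        exact Finset.sum_nonneg (fun j _ => mul_nonneg (hAnn _ _) (hxnn _))
    · apply Finset.sum_eq_zero
      intro i _
      by_cases hiR : (i : V) ∈ R v
      · have hmv : (psub A (sccOf adj v)).mulVec (fun j => if (j : V) ∈ R v then x j else 0) i
            = ∑ j ∈ R v, A i j * x j := by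
          simp only [Matrix.mulVec, dotProduct, psub, Matrix.submatrix_apply]
          rw [Finset.sum_coe_sort (sccOf adj v)
            (fun j => A i j * (if j ∈ R v then x j else 0))]
          rw [← Finset.sum_subset (fun j hj => hsubC j hj)
            (fun j _ hj => by simp [if_neg hj])]
          exact Finset.sum_congr rfl (fun j hj => by rw [if_pos hj])
        simp only [Pi.sub_apply, Pi.smul_apply, smul_eq_mul, hmv, if_pos hiR, hkey i hiR]
        ring
      · simp [if_neg hiR]
  · rintro ⟨v, x, hx0, hxnn, hres, hcomp⟩
    have hyC : ∀ (j : V) (h : j ∈ sccOf adj v),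
        (if h : j ∈ sccOf adj v then x ⟨j, h⟩ else 0) = x ⟨j, h⟩ := by
      intro j h; rw [dif_pos h]
    have hyN : ∀ (j : V), j ∉ sccOf adj v →
        (if h : j ∈ sccOf adj v then x ⟨j, h⟩ else 0) = 0 := by
      intro j h; rw [dif_neg h]
    have hynn : ∀ j : V, (0:ℝ) ≤ if h : j ∈ sccOf adj v then x ⟨j, h⟩ else 0 := by
      intro j
      by_cases h : j ∈ sccOf adj v
      · rw [hyC j h]; exact hxnn _
      · rw [hyN j h]
    have hmv : ∀ i : sccOf adj v,
        A.mulVec (fun i => if h : i ∈ sccOf adj v then x ⟨i, h⟩ else 0) (i : V)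
          = (psub A (sccOf adj v)).mulVec x i := by
      intro i
      simp only [Matrix.mulVec, dotProduct, psub, Matrix.submatrix_apply]
      rw [sum_eq_sum_coe (sccOf adj v)
        (fun j => A i j * if h : j ∈ sccOf adj v then x ⟨j, h⟩ else 0)
        (fun j hj => by show A (i:V) j * _ = 0; rw [hyN j hj, mul_zero])]
      exact Finset.sum_congr rfl (fun j _ => by rw [hyC j j.2])
    refine ⟨fun i => if h : i ∈ sccOf adj v then x ⟨i, h⟩ else 0, ?_, ?_, ?_, ?_⟩
    · intro h
      apply hx0
      funext j
      have h2 := congrFun h (j : V)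
      simp only [Pi.zero_apply] at h2
      rw [dif_pos j.2] at h2
      simpa using h2
    · intro j; exact hynn j
    · intro i
      simp only [Pi.sub_apply, Pi.smul_apply, smul_eq_mul, Pi.zero_apply]
      by_cases h : i ∈ sccOf adj v
      · have hr := hres ⟨i, h⟩
        simp only [Pi.sub_apply, Pi.smul_apply, smul_eq_mul, Pi.zero_apply] at hr
        rw [hmv ⟨i, h⟩, dif_pos h]
        exact hr
      · rw [dif_neg h, mul_zero, sub_zero]
        simp only [Matrix.mulVec, dotProduct]
        exact Finset.sum_nonneg (fun j _ => mul_nonneg (hAnn _ _) (hynn _))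
    · rw [sum_eq_sum_coe (sccOf adj v)
        (fun i => (if h : i ∈ sccOf adj v then x ⟨i, h⟩ else 0)
          * (A.mulVec (fun i => if h : i ∈ sccOf adj v then x ⟨i, h⟩ else 0)
              - lam • (fun i => if h : i ∈ sccOf adj v then x ⟨i, h⟩ else 0)) i)
        (fun i hi => by show _ * _ = 0; rw [hyN i hi, zero_mul])]
      refine Eq.trans ?_ hcomp
      apply Finset.sum_congr rfl
      intro i _
      simp only [Pi.sub_apply, Pi.smul_apply, smul_eq_mul]
      rw [hmv i, dif_pos i.2]
end

section
/- Let D₁ = (V₁, adj₁) and D₂ = (V₂, adj₂) be finite simple digraphs, let u ∈ V₁ and v ∈ V₂, and let D be the digraph on the disjoint sum V₁ ⊕ V₂ whose arcs are those of D₁ inside V₁, those of D₂ inside V₂, together with the single extra arc from u (in the first summand) to v (in the second summand). Then Π(D) = Π(D₁) ∪ Π(D₂). -/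
open Matrix Polynomial

def sumAdj {V₁ V₂ : Type*} (adj₁ : V₁ → V₁ → Prop) (adj₂ : V₂ → V₂ → Prop)
    (u : V₁) (v : V₂) : V₁ ⊕ V₂ → V₁ ⊕ V₂ → Prop
  | Sum.inl a, Sum.inl b => adj₁ a b
  | Sum.inr a, Sum.inr b => adj₂ a b
  | Sum.inl a, Sum.inr b => a = u ∧ b = v
  | Sum.inr _, Sum.inl _ => False

open scoped Classical in
lemma mulVec_inl {V₁ V₂ : Type*} [Fintype V₁] [Fintype V₂]
    (adj₁ : V₁ → V₁ → Prop) (adj₂ : V₂ → V₂ → Prop) (u : V₁) (v : V₂)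
    (x : V₁ ⊕ V₂ → ℝ) (a : V₁) :
    (adjMat (sumAdj adj₁ adj₂ u v)).mulVec x (Sum.inl a)
      = (adjMat adj₁).mulVec (x ∘ Sum.inl) a + (if a = u then x (Sum.inr v) else 0) := by
  simp only [Matrix.mulVec, dotProduct, Fintype.sum_sum_type, adjMat, sumAdj, Matrix.of_apply,
    Function.comp]
  congr 1
  · by_cases h : a = u <;> simp [h]

lemma mulVec_inr {V₁ V₂ : Type*} [Fintype V₁] [Fintype V₂]
    (adj₁ : V₁ → V₁ → Prop) (adj₂ : V₂ → V₂ → Prop) (u : V₁) (v : V₂)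
    (x : V₁ ⊕ V₂ → ℝ) (a : V₂) :
    (adjMat (sumAdj adj₁ adj₂ u v)).mulVec x (Sum.inr a)
      = (adjMat adj₂).mulVec (x ∘ Sum.inr) a := by
  simp only [Matrix.mulVec, dotProduct, Fintype.sum_sum_type, adjMat, sumAdj, Matrix.of_apply,
    Function.comp]
  simp
  refine Finset.sum_congr rfl fun b _ => ?_
  split_ifs with h
  · exact (congrArg (· * x (Sum.inr b)) (if_pos h)).trans (one_mul _)
  · exact mul_eq_zero_of_left (if_neg h) _

theorem stmt4 {V₁ V₂ : Type*} [Fintype V₁] [Fintype V₂]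
    (adj₁ : V₁ → V₁ → Prop) (adj₂ : V₂ → V₂ → Prop)
    (h₁ : Irreflexive adj₁) (h₂ : Irreflexive adj₂) (u : V₁) (v : V₂) :
    {lam : ℝ | isComplEig (adjMat (sumAdj adj₁ adj₂ u v)) lam} =
      {lam : ℝ | isComplEig (adjMat adj₁) lam} ∪ {lam : ℝ | isComplEig (adjMat adj₂) lam} := by
  classical
  ext lam
  simp only [Set.mem_setOf_eq, Set.mem_union]
  constructor
  · rintro ⟨x, hx0, hxn, hr, hs⟩
    have hterm : ∀ i, x i * ((adjMat (sumAdj adj₁ adj₂ u v)).mulVec x - lam • x) i = 0 := by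
      have := (Finset.sum_eq_zero_iff_of_nonneg (fun i _ =>
        mul_nonneg (hxn i) (hr i))).mp hs
      intro i; exact this i (Finset.mem_univ i)
    by_cases h2 : (x ∘ Sum.inr) = 0
    · left
      refine ⟨x ∘ Sum.inl, ?_, fun a => hxn _, ?_, ?_⟩
      · intro h
        apply hx0
        funext i
        cases i with
        | inl a => exact congrFun h a
        | inr a => exact congrFun h2 a
      · intro a
        have := hr (Sum.inl a)
        have hmv := mulVec_inl adj₁ adj₂ u v x a
        have hv0 : x (Sum.inr v) = 0 := congrFun h2 v
        simp only [Pi.sub_apply, Pi.smul_apply, smul_eq_mul, Pi.zero_apply] at this ⊢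
        rw [hmv, hv0] at this
        simpa using this
      · have : ∀ a : V₁, (x ∘ Sum.inl) a *
            ((adjMat adj₁).mulVec (x ∘ Sum.inl) - lam • (x ∘ Sum.inl)) a = 0 := by
          intro a
          have := hterm (Sum.inl a)
          have hmv := mulVec_inl adj₁ adj₂ u v x a
          have hv0 : x (Sum.inr v) = 0 := congrFun h2 v
          simp only [Pi.sub_apply, Pi.smul_apply, smul_eq_mul, Function.comp_apply] at this ⊢
          rw [hmv, hv0] at this
          simpa using this
        simpa using Finset.sum_eq_zero (fun a _ => this a)
    · right
      refine ⟨x ∘ Sum.inr, h2, fun a => hxn _, ?_, ?_⟩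
      · intro a
        have := hr (Sum.inr a)
        have hmv := mulVec_inr adj₁ adj₂ u v x a
        simp only [Pi.sub_apply, Pi.smul_apply, smul_eq_mul, Pi.zero_apply] at this ⊢
        rw [hmv] at this
        simpa using this
      · have : ∀ a : V₂, (x ∘ Sum.inr) a *
            ((adjMat adj₂).mulVec (x ∘ Sum.inr) - lam • (x ∘ Sum.inr)) a = 0 := by
          intro a
          have := hterm (Sum.inr a)
          have hmv := mulVec_inr adj₁ adj₂ u v x a
          simp only [Pi.sub_apply, Pi.smul_apply, smul_eq_mul, Function.comp_apply] at this ⊢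
          rw [hmv] at this
          simpa using this
        simpa using Finset.sum_eq_zero (fun a _ => this a)
  · rintro (⟨x, hx0, hxn, hr, hs⟩ | ⟨x, hx0, hxn, hr, hs⟩)
    · -- extend by zero on V₂
      refine ⟨Sum.elim x 0, ?_, ?_, ?_, ?_⟩
      · intro h
        exact hx0 (funext fun a => congrFun h (Sum.inl a))
      · intro i
        cases i with
        | inl a => exact hxn a
        | inr a => exact le_refl 0
      · intro i
        cases i with
        | inl a =>
          have := hr a
          have hmv := mulVec_inl adj₁ adj₂ u v (Sum.elim x 0) a
          have hcl : (Sum.elim x (0 : V₂ → ℝ)) ∘ Sum.inl = x := rfl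
          simp only [Pi.sub_apply, Pi.smul_apply, smul_eq_mul, Pi.zero_apply] at this ⊢
          rw [hmv, hcl]
          simp [this]
        | inr a =>
          have hmv := mulVec_inr adj₁ adj₂ u v (Sum.elim x 0) a
          have hcr : (Sum.elim x (0 : V₂ → ℝ)) ∘ Sum.inr = 0 := rfl
          simp only [Pi.sub_apply, Pi.smul_apply, smul_eq_mul, Pi.zero_apply]
          rw [hmv, hcr]
          simp
      · rw [Fintype.sum_sum_type]
        have h2 : ∀ a : V₂, Sum.elim x (0 : V₂ → ℝ) (Sum.inr a) *
            ((adjMat (sumAdj adj₁ adj₂ u v)).mulVec (Sum.elim x (0 : V₂ → ℝ)) - lam • Sum.elim x (0 : V₂ → ℝ)) (Sum.inr a) = 0 := by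
          intro a; simp
        rw [Finset.sum_eq_zero (fun a _ => h2 a), add_zero]
        rw [← hs]
        apply Finset.sum_congr rfl
        intro a _
        have hmv := mulVec_inl adj₁ adj₂ u v (Sum.elim x 0) a
        have hcl : (Sum.elim x (0 : V₂ → ℝ)) ∘ Sum.inl = x := rfl
        simp only [Pi.sub_apply, Pi.smul_apply, smul_eq_mul, Sum.elim_inl]
        rw [hmv, hcl]
        simp
    · -- extend by zero on V₁
      refine ⟨Sum.elim 0 x, ?_, ?_, ?_, ?_⟩
      · intro h
        exact hx0 (funext fun a => congrFun h (Sum.inr a))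
      · intro i
        cases i with
        | inl a => exact le_refl 0
        | inr a => exact hxn a
      · intro i
        cases i with
        | inl a =>
          have hmv := mulVec_inl adj₁ adj₂ u v (Sum.elim 0 x) a
          have hcl : (Sum.elim (0 : V₁ → ℝ) x) ∘ Sum.inl = 0 := rfl
          simp only [Pi.sub_apply, Pi.smul_apply, smul_eq_mul, Pi.zero_apply]
          rw [hmv, hcl]
          simp only [Matrix.mulVec_zero, Pi.zero_apply, zero_add, Sum.elim_inl, mul_zero, sub_zero]
          by_cases h : a = u
          · simp only [h, if_pos rfl, Sum.elim_inr]
            simpa using hxn v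
          · simp [h]
        | inr a =>
          have := hr a
          have hmv := mulVec_inr adj₁ adj₂ u v (Sum.elim 0 x) a
          have hcr : (Sum.elim (0 : V₁ → ℝ) x) ∘ Sum.inr = x := rfl
          simp only [Pi.sub_apply, Pi.smul_apply, smul_eq_mul, Pi.zero_apply] at this ⊢
          rw [hmv, hcr]
          simp [this]
      · rw [Fintype.sum_sum_type]
        have h1 : ∀ a : V₁, Sum.elim (0 : V₁ → ℝ) x (Sum.inl a) *
            ((adjMat (sumAdj adj₁ adj₂ u v)).mulVec (Sum.elim (0 : V₁ → ℝ) x) - lam • Sum.elim (0 : V₁ → ℝ) x) (Sum.inl a) = 0 := by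
          intro a; simp
        rw [Finset.sum_eq_zero (fun a _ => h1 a), zero_add]
        rw [← hs]
        apply Finset.sum_congr rfl
        intro a _
        have hmv := mulVec_inr adj₁ adj₂ u v (Sum.elim 0 x) a
        have hcr : (Sum.elim (0 : V₁ → ℝ) x) ∘ Sum.inr = x := rfl
        simp only [Pi.sub_apply, Pi.smul_apply, smul_eq_mul, Sum.elim_inr]
        rw [hmv, hcr]
end

section
/- Let D be a finite simple digraph on a finite vertex type V. Then D contains a cycle if and only if 1 is a complementarity eigenvalue of D, i.e., 1 ∈ Π(D). -/
open Matrix Polynomial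

/-- From a nonempty set where every vertex has an out-neighbor in the set, build a cycle. -/
lemma exists_cycle_aux {V : Type*} [Fintype V] (adj : V → V → Prop) (hirr : Irreflexive adj)
    (S : Set V) (hS : S.Nonempty) (hsucc : ∀ i ∈ S, ∃ j, j ∈ S ∧ adj i j) :
    ∃ (k : ℕ) (c : ZMod k → V), 2 ≤ k ∧ Function.Injective c ∧ ∀ i, adj (c i) (c (i + 1)) := by
  classical
  choose! f hfS hfadj using hsucc
  obtain ⟨v, hv⟩ := hS
  have hiter : ∀ n, f^[n] v ∈ S := by
    intro n; induction n with
    | zero => exact hv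
    | succ n ih => rw [Function.iterate_succ_apply']; exact hfS _ ih
  obtain ⟨a, b, hab, heq⟩ := Finite.exists_ne_map_eq_of_infinite (fun n : ℕ => f^[n] v)
  have key : ∀ a b : ℕ, a < b → f^[a] v = f^[b] v →
      ∃ w, w ∈ S ∧ ∃ p, 0 < p ∧ f^[p] w = w := by
    intro a b hlt he
    refine ⟨f^[a] v, hiter a, b - a, by omega, ?_⟩
    rw [← Function.iterate_add_apply, Nat.sub_add_cancel hlt.le, ← he]
  have hex : ∃ w, w ∈ S ∧ ∃ p, 0 < p ∧ f^[p] w = w := by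
    rcases Nat.lt_or_ge a b with h | h
    · exact key a b h heq
    · exact key b a (by omega) heq.symm
  obtain ⟨w, hwS, hpe⟩ := hex
  have hwiter : ∀ n, f^[n] w ∈ S := by
    intro n; induction n with
    | zero => exact hwS
    | succ n ih => rw [Function.iterate_succ_apply']; exact hfS _ ih
  set p := Nat.find hpe with hp
  obtain ⟨hppos, hpw⟩ := Nat.find_spec hpe
  rw [← hp] at hppos hpw
  have hp2 : 2 ≤ p := by
    rcases Nat.lt_or_ge p 2 with h | h
    · exfalso
      have hp1 : p = 1 := by omega
      have hfw : f w = w := by rw [hp1] at hpw; simpa using hpw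
      have := hfadj w hwS
      rw [hfw] at this
      exact hirr w this
    · exact h
  haveI : NeZero p := ⟨by omega⟩
  have hmin : ∀ q, 0 < q → q < p → f^[q] w ≠ w := by
    intro q h1 h2 he
    exact Nat.find_min hpe h2 ⟨h1, he⟩
  have inj2 : ∀ i j : ZMod p, i.val < j.val → f^[i.val] w ≠ f^[j.val] w := by
    intro i j hlt he
    have hjlt : j.val < p := ZMod.val_lt j
    have : f^[p - j.val + i.val] w = w := by
      rw [Function.iterate_add_apply, he, ← Function.iterate_add_apply,
        Nat.sub_add_cancel hjlt.le, hpw]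
    exact hmin _ (by omega) (by omega) this
  refine ⟨p, fun i => f^[i.val] w, hp2, ?_, ?_⟩
  · intro i j he
    rcases lt_trichotomy i.val j.val with h | h | h
    · exact absurd he (inj2 i j h)
    · exact ZMod.val_injective p h
    · exact absurd he.symm (inj2 j i h)
  · intro i
    have hc : f^[(i + 1 : ZMod p).val] w = f (f^[i.val] w) := by
      rw [show f (f^[i.val] w) = f^[i.val + 1] w from (Function.iterate_succ_apply' f i.val w).symm]
      have h1 : (1 : ZMod p).val = 1 := by
        rw [ZMod.val_one_eq_one_mod]; exact Nat.mod_eq_of_lt (by omega)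
      have hadd : (i + 1 : ZMod p).val = (i.val + 1) % p := by
        rw [ZMod.val_add, h1]
      rcases Nat.lt_or_ge (i.val + 1) p with h | h
      · rw [hadd, Nat.mod_eq_of_lt h]
      · have he : i.val + 1 = p := by have := ZMod.val_lt i; omega
        rw [hadd, he, Nat.mod_self, Function.iterate_zero_apply, hpw]
    simp only [hc]
    exact hfadj _ (hwiter i.val)

lemma chord_free {V : Type*} (adj : V → V → Prop) (hirr : Irreflexive adj)
    (h : ∃ (k : ℕ) (c : ZMod k → V), 2 ≤ k ∧ Function.Injective c ∧
      ∀ i, adj (c i) (c (i + 1))) :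
    ∃ (k : ℕ) (c : ZMod k → V), 2 ≤ k ∧ Function.Injective c ∧
      (∀ i, adj (c i) (c (i + 1))) ∧ ∀ m n : ZMod k, adj (c m) (c n) → n = m + 1 := by
  classical
  set k := Nat.find h with hkdef
  obtain ⟨c, hk2, hinj, hadj⟩ := Nat.find_spec h
  refine ⟨k, c, hk2, hinj, hadj, ?_⟩
  intro m n hmn
  by_contra hne
  haveI : NeZero k := ⟨by omega⟩
  have hnm : n - m ≠ 0 := by
    intro h'
    have : n = m := by rwa [sub_eq_zero] at h'
    exact hirr _ (this ▸ hmn)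
  set d := (n - m).val with hd
  have hdcast : (d : ZMod k) = n - m := ZMod.natCast_zmod_val _
  have hd0 : d ≠ 0 := fun h' => hnm ((ZMod.val_eq_zero _).1 h')
  have hd1 : d ≠ 1 := by
    intro h1
    apply hne
    rw [h1] at hdcast
    push_cast at hdcast
    rw [eq_comm, sub_eq_iff_eq_add] at hdcast
    rw [hdcast]; ring
  have hdlt : d < k := ZMod.val_lt _
  have hd2 : 2 ≤ d := by omega
  set l := k - d + 1 with hl
  have hl2 : 2 ≤ l := by omega
  have hlk : l < k := by omega
  haveI : NeZero l := ⟨by omega⟩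
  -- Fact A
  have factA : ∀ s : ℕ, s ≤ l - 2 → n + (s : ZMod k) ≠ m := by
    intro s hs he
    have : ((d + s : ℕ) : ZMod k) = 0 := by
      push_cast
      rw [hdcast]
      rw [← he]; ring
    rw [ZMod.natCast_eq_zero_iff] at this
    have : k ≤ d + s := Nat.le_of_dvd (by omega) this
    omega
  -- Fact B
  have factB : ∀ s t : ℕ, s ≤ l - 2 → t ≤ l - 2 → n + (s : ZMod k) = n + (t : ZMod k) → s = t := by
    intro s t hs ht he
    have h1 : (s : ZMod k) = (t : ZMod k) := by
      have := add_left_cancel he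
      exact this
    have : ((s : ZMod k)).val = ((t : ZMod k)).val := by rw [h1]
    rwa [ZMod.val_cast_of_lt (by omega), ZMod.val_cast_of_lt (by omega)] at this
  set c' : ZMod l → V := fun t => if t.val = 0 then c m else c (n + ((t.val - 1 : ℕ) : ZMod k))
    with hc'
  have hc'inj : Function.Injective c' := by
    intro t s he
    simp only [hc'] at he
    by_cases ht : t.val = 0 <;> by_cases hs : s.val = 0
    · exact ZMod.val_injective l (ht.trans hs.symm)
    · rw [if_pos ht, if_neg hs] at he
      exact absurd (hinj he).symm (factA (s.val - 1) (by have := ZMod.val_lt s; omega))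
    · rw [if_neg ht, if_pos hs] at he
      exact absurd (hinj he.symm).symm (factA (t.val - 1) (by have := ZMod.val_lt t; omega))
    · rw [if_neg ht, if_neg hs] at he
      have := factB _ _ (by have := ZMod.val_lt t; omega) (by have := ZMod.val_lt s; omega)
        (hinj he)
      exact ZMod.val_injective l (by omega)
  have hval1 : (1 : ZMod l).val = 1 := by
    rw [ZMod.val_one_eq_one_mod]; exact Nat.mod_eq_of_lt (by omega)
  have hvaladd : ∀ t : ZMod l, (t + 1 : ZMod l).val = (t.val + 1) % l := by
    intro t; rw [ZMod.val_add, hval1]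
  have hc'adj : ∀ t : ZMod l, adj (c' t) (c' (t + 1)) := by
    intro t
    have htlt : t.val < l := ZMod.val_lt t
    by_cases ht : t.val = 0
    · have h1 : (t + 1 : ZMod l).val = 1 := by rw [hvaladd, ht, Nat.mod_eq_of_lt (by omega)]
      simp only [hc', ht, h1, if_pos rfl, if_neg one_ne_zero]
      norm_num
      exact hmn
    · rcases Nat.lt_or_ge (t.val + 1) l with hcase | hcase
      · have h1 : (t + 1 : ZMod l).val = t.val + 1 := by
          rw [hvaladd, Nat.mod_eq_of_lt hcase]
        simp only [hc', h1, if_neg ht, if_neg (by omega : ¬ t.val + 1 = 0)]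
        have hcast : ((t.val + 1 - 1 : ℕ) : ZMod k) = ((t.val - 1 : ℕ) : ZMod k) + 1 := by
          have h2 : t.val + 1 - 1 = (t.val - 1) + 1 := by omega
          rw [h2]; push_cast; ring
        rw [hcast, ← add_assoc]
        exact hadj _
      · have htop : t.val = l - 1 := by omega
        have h1 : (t + 1 : ZMod l).val = 0 := by
          rw [hvaladd]
          have : t.val + 1 = l := by omega
          rw [this, Nat.mod_self]
        simp only [hc', h1, if_pos rfl, if_neg ht]
        have hkey : n + ((t.val - 1 : ℕ) : ZMod k) + 1 = m := by
          have h2 : t.val - 1 = l - 2 := by omega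
          have h3 : (l - 2 : ℕ) = k - d - 1 := by omega
          rw [h2, h3]
          have h4 : ((d + (k - d - 1) + 1 : ℕ) : ZMod k) = 0 := by
            have : d + (k - d - 1) + 1 = k := by omega
            rw [this, ZMod.natCast_self]
          push_cast at h4
          rw [hdcast] at h4
          have : n + ((k - d - 1 : ℕ) : ZMod k) + 1 = m + ((n - m) + ((k - d - 1 : ℕ) : ZMod k) + 1) := by ring
          rw [this, h4, add_zero]
        rw [← hkey]
        exact hadj _
  exact Nat.find_min h hlk ⟨c', hl2, hc'inj, hc'adj⟩

theorem stmt6 {V : Type*} [Fintype V] (adj : V → V → Prop) (hirr : Irreflexive adj) :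
    (∃ (k : ℕ) (c : ZMod k → V), 2 ≤ k ∧ Function.Injective c ∧
      ∀ i, adj (c i) (c (i + 1))) ↔ isComplEig (adjMat adj) 1 := by
  classical
  constructor
  · intro hcyc
    obtain ⟨k, c, hk2, hinj, hadj, hchord⟩ := chord_free adj hirr hcyc
    haveI : NeZero k := ⟨by omega⟩
    set x : V → ℝ := fun i => if i ∈ Set.range c then 1 else 0 with hx
    have hx0 : ∀ i, 0 ≤ x i := by
      intro i; simp only [hx]; split <;> norm_num
    have hmul : ∀ i, (adjMat adj).mulVec x i = ∑ j, (if adj i j then (1:ℝ) else 0) * x j := by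
      intro i
      simp [Matrix.mulVec, dotProduct, adjMat]
    have hmulc : ∀ m : ZMod k, (adjMat adj).mulVec x (c m) = 1 := by
      intro m
      rw [hmul]
      have hpt : ∀ j, (if adj (c m) j then (1:ℝ) else 0) * x j
          = if j = c (m+1) then 1 else 0 := by
        intro j
        by_cases hj : j = c (m + 1)
        · subst hj
          rw [if_pos (hadj m), if_pos rfl, one_mul]
          simp only [hx]
          exact if_pos (Set.mem_range_self _)
        · rw [if_neg hj]
          by_cases ha : adj (c m) j
          · have hnr : j ∉ Set.range c := by
              rintro ⟨n, rfl⟩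
              exact hj (congrArg c (hchord m n ha))
            have hz : x j = 0 := by simp only [hx]; exact if_neg hnr
            rw [hz, mul_zero]
          · simp [ha]
      rw [Finset.sum_congr rfl (fun j _ => hpt j)]
      simp
    have hmulnn : ∀ i, 0 ≤ (adjMat adj).mulVec x i := by
      intro i; rw [hmul]
      apply Finset.sum_nonneg
      intro j _
      apply mul_nonneg _ (hx0 j)
      split <;> norm_num
    refine ⟨x, ?_, ?_, ?_, ?_⟩
    · intro h0
      have h1 := congrFun h0 (c 0)
      have h2 : x (c 0) = 1 := by simp only [hx]; exact if_pos (Set.mem_range_self _)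
      rw [h2] at h1
      simp at h1
    · intro i; simpa using hx0 i
    · intro i
      simp only [Pi.sub_apply, Pi.smul_apply, one_smul, Pi.zero_apply, smul_eq_mul, one_mul]
      by_cases hi : i ∈ Set.range c
      · obtain ⟨m, rfl⟩ := hi
        rw [hmulc]
        have h2 : x (c m) = 1 := by simp only [hx]; exact if_pos (Set.mem_range_self _)
        rw [h2]; norm_num
      · have hz : x i = 0 := by simp only [hx]; exact if_neg hi
        rw [hz]
        simpa using hmulnn i
    · apply Finset.sum_eq_zero
      intro i _
      by_cases hi : i ∈ Set.range c
      · obtain ⟨m, rfl⟩ := hi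
        have h1 : x (c m) = 1 := by simp only [hx]; exact if_pos (Set.mem_range_self _)
        simp [Pi.sub_apply, one_smul, hmulc m, h1]
      · have hz : x i = 0 := by simp only [hx]; exact if_neg hi
        simp [hz]
  · rintro ⟨x, hxne, hxnn, hAxnn, hsum⟩
    have hterm : ∀ i, x i * ((adjMat adj).mulVec x - (1:ℝ) • x) i = 0 := by
      have h := (Finset.sum_eq_zero_iff_of_nonneg
        (fun i _ => mul_nonneg (hxnn i) (hAxnn i))).1 hsum
      intro i; exact h i (Finset.mem_univ i)
    apply exists_cycle_aux adj hirr {i | 0 < x i}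
    · by_contra hempty
      apply hxne
      funext i
      have h1 : ¬ 0 < x i := fun h => hempty ⟨i, h⟩
      have h2 := hxnn i
      simp only [Pi.zero_apply] at h2 ⊢
      linarith
    · intro i hi
      have hi' : 0 < x i := hi
      have h1 : (adjMat adj).mulVec x i = x i := by
        have h := hterm i
        simp only [Pi.sub_apply, Pi.smul_apply, one_smul, smul_eq_mul, one_mul] at h
        rcases mul_eq_zero.1 h with h' | h'
        · exact absurd h' (ne_of_gt hi')
        · linarith [sub_eq_zero.1 h']
      have hpos : 0 < ∑ j, adjMat adj i j * x j := by
        have : ∑ j, adjMat adj i j * x j = (adjMat adj).mulVec x i := by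
          simp [Matrix.mulVec, dotProduct]
        rw [this, h1]; exact hi'
      obtain ⟨j, hj⟩ : ∃ j, adjMat adj i j * x j ≠ 0 := by
        by_contra hall
        push_neg at hall
        rw [Finset.sum_eq_zero (fun j _ => hall j)] at hpos
        exact lt_irrefl 0 hpos
      have hadjij : adj i j := by
        by_contra hna
        simp [adjMat, hna] at hj
      have hxj : 0 < x j := by
        rcases lt_or_eq_of_le (show (0:ℝ) ≤ x j from hxnn j) with h' | h'
        · exact h'
        · exfalso; apply hj; rw [← h', mul_zero]
      exact ⟨j, hxj, hadjij⟩
end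

section
/- Let D be a finite simple digraph on a nonempty finite vertex type V. The following are equivalent: (i) Π(D) = {0}; (ii) Π(D) has exactly one element; (iii) D is acyclic. -/
open Matrix Polynomial

lemma mulVec_nonneg {V : Type*} [Fintype V] (adj : V → V → Prop) {x : V → ℝ} (hx : 0 ≤ x)
    (i : V) : 0 ≤ (adjMat adj).mulVec x i := by
  refine Finset.sum_nonneg fun j _ => mul_nonneg (adjMat_nonneg adj i j) (hx j)

lemma zero_isComplEig {V : Type*} [Fintype V] [Nonempty V] (adj : V → V → Prop)
    (hirr : Irreflexive adj) : isComplEig (adjMat adj) 0 := by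
  classical
  obtain ⟨v⟩ := ‹Nonempty V›
  refine ⟨fun i => if i = v then 1 else 0, ?_, ?_, ?_, ?_⟩
  · intro h
    have := congrFun h v
    simp at this
  · intro i; dsimp; split <;> norm_num
  · intro i
    simp only [Pi.zero_apply, Pi.sub_apply, Pi.smul_apply, zero_smul, sub_zero, smul_eq_mul]
    exact mulVec_nonneg adj (fun i => by dsimp; split <;> norm_num) i
  · rw [Finset.sum_eq_single v]
    · simp only [if_pos rfl, one_mul, Pi.sub_apply, Pi.smul_apply, zero_smul, smul_eq_mul,
        sub_zero]
      have : (adjMat adj).mulVec (fun i => if i = v then 1 else 0) v = adjMat adj v v := by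
        rw [Matrix.mulVec, dotProduct, Finset.sum_eq_single v] <;> simp +contextual
      rw [this]
      simp [adjMat, hirr v]
    · intro b _ hb; simp [hb]
    · simp

lemma eig_to_cycle {V : Type*} [Fintype V] (adj : V → V → Prop) (hirr : Irreflexive adj)
    {lam : ℝ} (h : isComplEig (adjMat adj) lam) (hlam : lam ≠ 0) :
    ∃ (k : ℕ) (c : ZMod k → V), 2 ≤ k ∧ Function.Injective c ∧ ∀ i, adj (c i) (c (i + 1)) := by
  classical
  obtain ⟨x, hx0, hxnn, hge, hsum⟩ := h
  have hterm : ∀ i, x i * ((adjMat adj).mulVec x - lam • x) i = 0 := by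
    have := (Finset.sum_eq_zero_iff_of_nonneg (fun i _ => mul_nonneg (hxnn i) (hge i))).mp hsum
    exact fun i => this i (Finset.mem_univ i)
  have heq : ∀ i, 0 < x i → (adjMat adj).mulVec x i = lam * x i := by
    intro i hi
    have h2 : ((adjMat adj).mulVec x - lam • x) i = 0 := by
      rcases mul_eq_zero.mp (hterm i) with h | h
      · exact absurd h (ne_of_gt hi)
      · exact h
    simp only [Pi.sub_apply, Pi.smul_apply, smul_eq_mul] at h2
    linarith
  obtain ⟨i0, hi0⟩ : ∃ i, 0 < x i := by
    by_contra hc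
    push_neg at hc
    exact hx0 (funext fun i => le_antisymm (hc i) (hxnn i))
  have hlampos : 0 < lam := by
    rcases lt_trichotomy lam 0 with h | h | h
    · exfalso
      have h1 := heq i0 hi0
      have h2 := mulVec_nonneg adj hxnn i0
      nlinarith
    · exact absurd h hlam
    · exact h
  have hsucc : ∀ i, 0 < x i → ∃ j, adj i j ∧ 0 < x j := by
    intro i hi
    by_contra hc
    push_neg at hc
    have h0 : (adjMat adj).mulVec x i = 0 := by
      rw [Matrix.mulVec, dotProduct]
      refine Finset.sum_eq_zero fun j _ => ?_
      by_cases hj : adj i j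
      · have : x j = 0 := le_antisymm (hc j hj) (hxnn j)
        simp [this]
      · simp [adjMat, hj]
    rw [heq i hi] at h0
    nlinarith
  choose f hf1 hf2 using hsucc
  let g : V → V := fun i => if h : 0 < x i then f i h else i
  have hg1 : ∀ i, 0 < x i → adj i (g i) := fun i hi => by
    simp only [g, dif_pos hi]; exact hf1 i hi
  have hg2 : ∀ i, 0 < x i → 0 < x (g i) := fun i hi => by
    simp only [g, dif_pos hi]; exact hf2 i hi
  have hiter : ∀ n, 0 < x (g^[n] i0) := by
    intro n; induction n with
    | zero => simpa
    | succ n ih => rw [Function.iterate_succ_apply']; exact hg2 _ ih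
  obtain ⟨a, b, hab, he⟩ := Finite.exists_ne_map_eq_of_infinite (fun n : ℕ => g^[n] i0)
  have hP : ∃ q, ∃ p, p < q ∧ g^[p] i0 = g^[q] i0 := by
    rcases Nat.lt_or_ge a b with h | h
    · exact ⟨b, a, h, he⟩
    · exact ⟨a, b, lt_of_le_of_ne h (Ne.symm (fun hh => hab (by omega))), he.symm⟩
  have hmin : ∀ q', q' < Nat.find hP → ¬ ∃ p, p < q' ∧ g^[p] i0 = g^[q'] i0 := by
    intro q' hq'
    have := Nat.find_min hP hq'
    simpa using this
  obtain ⟨p0, hpq, hpe⟩ := Nat.find_spec hP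
  set q0 := Nat.find hP with hq0
  set m := q0 - p0 with hm
  have hm2 : 2 ≤ m := by
    by_contra hcon
    have hm1' : q0 = p0 + 1 := by omega
    have e : g (g^[p0] i0) = g^[p0] i0 :=
      calc g (g^[p0] i0) = g^[p0 + 1] i0 := (Function.iterate_succ_apply' g p0 i0).symm
        _ = g^[q0] i0 := by rw [hm1']
        _ = g^[p0] i0 := hpe.symm
    exact hirr _ (e ▸ hg1 _ (hiter p0))
  haveI : NeZero m := ⟨by omega⟩
  haveI : Fact (1 < m) := ⟨by omega⟩
  refine ⟨m, fun t => g^[p0 + t.val] i0, hm2, ?_, ?_⟩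
  · intro t1 t2 hte
    by_contra hne
    have hv : t1.val ≠ t2.val := by
      intro hvv
      apply hne
      have e1 : ((t1.val : ℕ) : ZMod m) = t1 := by
        rw [ZMod.natCast_val, ZMod.cast_id]
      have e2 : ((t2.val : ℕ) : ZMod m) = t2 := by
        rw [ZMod.natCast_val, ZMod.cast_id]
      rw [← e1, ← e2, hvv]
    have hbound : ∀ s : ZMod m, s.val < m := fun s => ZMod.val_lt s
    -- wlog t1.val < t2.val
    rcases Nat.lt_or_ge t1.val t2.val with hlt | hge'
    · have : ∃ p, p < p0 + t2.val ∧ g^[p] i0 = g^[p0 + t2.val] i0 :=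
        ⟨p0 + t1.val, by omega, hte⟩
      exact absurd this (Nat.find_min hP (by have := hbound t2; omega))
    · have hlt : t2.val < t1.val := by omega
      exact hmin (p0 + t1.val) (by have := hbound t1; omega) ⟨p0 + t2.val, by omega, hte.symm⟩
  · intro t
    have hkey : g^[p0 + (t + 1).val] i0 = g (g^[p0 + t.val] i0) := by
      rcases Nat.lt_or_ge (t.val + 1) m with hlt | hge'
      · have : (t + 1).val = t.val + 1 := by
          have h1 : (1 : ZMod m).val = 1 := ZMod.val_one m
          rw [ZMod.val_add_of_lt (by rw [h1]; exact hlt), h1]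
        rw [this, ← Nat.add_assoc, Function.iterate_succ_apply']
      · have hveq : t.val + 1 = m := by have := ZMod.val_lt t; omega
        have ht1 : t + 1 = 0 := by
          have e1 : ((t.val : ℕ) : ZMod m) = t := by rw [ZMod.natCast_val, ZMod.cast_id]
          have : ((t.val + 1 : ℕ) : ZMod m) = t + 1 := by push_cast [e1]; ring
          rw [← this, hveq, ZMod.natCast_self]
        rw [ht1]
        have : (0 : ZMod m).val = 0 := ZMod.val_zero
        rw [this, Nat.add_zero, hpe]
        have : q0 = (p0 + t.val) + 1 := by omega
        rw [this, Function.iterate_succ_apply']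
    show adj (g^[p0 + t.val] i0) (g^[p0 + (t + 1).val] i0)
    rw [hkey]
    exact hg1 _ (hiter _)

lemma exists_chordless {V : Type*} [Fintype V] (adj : V → V → Prop) (hirr : Irreflexive adj)
    (h : ∃ (k : ℕ) (c : ZMod k → V), 2 ≤ k ∧ Function.Injective c ∧ ∀ i, adj (c i) (c (i + 1))) :
    ∃ (k : ℕ) (c : ZMod k → V), 2 ≤ k ∧ Function.Injective c ∧ (∀ i, adj (c i) (c (i + 1))) ∧
      ∀ a b, adj (c a) (c b) → b = a + 1 := by
  classical
  have hP : ∃ k, ∃ c : ZMod k → V, 2 ≤ k ∧ Function.Injective c ∧ ∀ i, adj (c i) (c (i + 1)) := h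
  obtain ⟨k, hspec, hmin⟩ :
      ∃ k, (∃ c : ZMod k → V, 2 ≤ k ∧ Function.Injective c ∧ ∀ i, adj (c i) (c (i + 1))) ∧
        ∀ k', k' < k →
          ¬ ∃ c : ZMod k' → V, 2 ≤ k' ∧ Function.Injective c ∧ ∀ i, adj (c i) (c (i + 1)) :=
    ⟨Nat.find hP, Nat.find_spec hP, fun k' hk' => by simpa using Nat.find_min hP hk'⟩
  obtain ⟨c, hk2, hinj, hedge⟩ := hspec
  refine ⟨k, c, hk2, hinj, hedge, ?_⟩
  intro a b hab
  by_contra hne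
  haveI : NeZero k := ⟨by omega⟩
  haveI : Fact (1 < k) := ⟨by omega⟩
  have hba : b ≠ a := by
    intro hh
    exact hirr _ (hh ▸ hab)
  set m := (a - b).val + 1 with hm
  have habv : (a - b).val ≠ 0 := by
    intro hv
    have : a = b := by rwa [ZMod.val_eq_zero, sub_eq_zero] at hv
    exact hba this.symm
  have hm2 : 2 ≤ m := by omega
  have hmk : m < k := by
    have hlt : (a - b).val < k := ZMod.val_lt _
    rcases Nat.lt_or_ge ((a - b).val) (k - 1) with hh | hh
    · omega
    · exfalso
      have hveq : (a - b).val = k - 1 := by omega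
      have e1 : ((a - b).val : ZMod k) = a - b := by rw [ZMod.natCast_val, ZMod.cast_id]
      have e2 : ((k - 1 : ℕ) : ZMod k) = -1 := by
        rw [Nat.cast_sub (by omega : 1 ≤ k), ZMod.natCast_self]
        ring
      have : a - b = -1 := by rw [← e1, hveq, e2]
      exact hne (by linear_combination -this)
  haveI : NeZero m := ⟨by omega⟩
  haveI : Fact (1 < m) := ⟨by omega⟩
  refine hmin m hmk ⟨fun t => c (b + ((t.val : ℕ) : ZMod k)), hm2, ?_, ?_⟩
  · intro t1 t2 hte
    have h1 := hinj hte
    have h2 : ((t1.val : ℕ) : ZMod k) = ((t2.val : ℕ) : ZMod k) := by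
      have := h1
      exact add_left_cancel this
    have h3 : t1.val = t2.val := by
      have v1 : ((t1.val : ℕ) : ZMod k).val = t1.val := ZMod.val_cast_of_lt (by
        have := ZMod.val_lt t1; omega)
      have v2 : ((t2.val : ℕ) : ZMod k).val = t2.val := ZMod.val_cast_of_lt (by
        have := ZMod.val_lt t2; omega)
      rw [← v1, ← v2, h2]
    have e1 : ((t1.val : ℕ) : ZMod m) = t1 := by rw [ZMod.natCast_val, ZMod.cast_id]
    have e2 : ((t2.val : ℕ) : ZMod m) = t2 := by rw [ZMod.natCast_val, ZMod.cast_id]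
    rw [← e1, ← e2, h3]
  · intro t
    show adj (c (b + ((t.val : ℕ) : ZMod k))) (c (b + (((t + 1).val : ℕ) : ZMod k)))
    rcases Nat.lt_or_ge (t.val + 1) m with hlt | hge
    · have hv : (t + 1).val = t.val + 1 := by
        have h1 : (1 : ZMod m).val = 1 := ZMod.val_one m
        rw [ZMod.val_add_of_lt (by rw [h1]; exact hlt), h1]
      rw [hv]
      have : (((t.val + 1 : ℕ)) : ZMod k) = ((t.val : ℕ) : ZMod k) + 1 := by push_cast; ring
      rw [this, ← add_assoc]
      exact hedge _
    · have hveq : t.val = (a - b).val := by have := ZMod.val_lt t; omega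
      have ht1 : t + 1 = 0 := by
        have e1 : ((t.val : ℕ) : ZMod m) = t := by rw [ZMod.natCast_val, ZMod.cast_id]
        have e3 : ((t.val + 1 : ℕ) : ZMod m) = t + 1 := by push_cast [e1]; ring
        rw [← e3, show t.val + 1 = m by omega, ZMod.natCast_self]
      rw [ht1, hveq]
      have e1 : (((a - b).val : ℕ) : ZMod k) = a - b := by rw [ZMod.natCast_val, ZMod.cast_id]
      rw [e1]
      have : b + (a - b) = a := by ring
      rw [this]
      simp only [ZMod.val_zero, Nat.cast_zero, add_zero]
      exact hab

lemma chordless_one {V : Type*} [Fintype V] (adj : V → V → Prop)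
    {k : ℕ} {c : ZMod k → V} (hk2 : 2 ≤ k) (hinj : Function.Injective c)
    (hedge : ∀ i, adj (c i) (c (i + 1))) (hch : ∀ a b, adj (c a) (c b) → b = a + 1) :
    isComplEig (adjMat adj) 1 := by
  classical
  haveI : NeZero k := ⟨by omega⟩
  set x : V → ℝ := fun i => if ∃ t, c t = i then 1 else 0 with hx
  have hxnn : (0 : V → ℝ) ≤ x := by
    intro i; simp only [hx]; split <;> norm_num
  have hon : ∀ t, x (c t) = 1 := by
    intro t; simp only [hx]; rw [if_pos ⟨t, rfl⟩]
  have hoff : ∀ i, (¬ ∃ t, c t = i) → x i = 0 := by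
    intro i hi; simp only [hx]; rw [if_neg hi]
  have hAx : ∀ t, (adjMat adj).mulVec x (c t) = 1 := by
    intro t
    rw [Matrix.mulVec, dotProduct, Finset.sum_eq_single (c (t + 1))]
    · rw [hon (t + 1)]
      simp [adjMat, hedge t]
    · intro j _ hj
      by_cases h1 : adj (c t) j
      · by_cases h2 : ∃ s, c s = j
        · obtain ⟨s, rfl⟩ := h2
          exact absurd (congrArg c (hch t s h1)) hj
        · rw [hoff j h2, mul_zero]
      · simp only [adjMat, Matrix.of_apply]
        rw [if_neg h1, zero_mul]
    · intro hh; exact absurd (Finset.mem_univ _) hh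
  refine ⟨x, ?_, hxnn, ?_, ?_⟩
  · intro hh
    have := congrFun hh (c 0)
    rw [hon 0] at this
    simp at this
  · intro i
    simp only [Pi.zero_apply, Pi.sub_apply, Pi.smul_apply, one_smul]
    by_cases hi : ∃ t, c t = i
    · obtain ⟨t, rfl⟩ := hi
      rw [hAx t, hon t]
      norm_num
    · rw [hoff i hi, sub_zero]
      exact mulVec_nonneg adj hxnn i
  · refine Finset.sum_eq_zero fun i _ => ?_
    by_cases hi : ∃ t, c t = i
    · obtain ⟨t, rfl⟩ := hi
      simp only [Pi.sub_apply, Pi.smul_apply, one_smul]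
      rw [hAx t, hon t]
      ring
    · rw [hoff i hi, zero_mul]


theorem stmt7 {V : Type*} [Fintype V] [Nonempty V] (adj : V → V → Prop)
    (hirr : Irreflexive adj) :
    [{lam : ℝ | isComplEig (adjMat adj) lam} = {0},
     ∃ a : ℝ, {lam : ℝ | isComplEig (adjMat adj) lam} = {a},
     ¬ ∃ (k : ℕ) (c : ZMod k → V), 2 ≤ k ∧ Function.Injective c ∧
        ∀ i, adj (c i) (c (i + 1))].TFAE := by
  tfae_have 1 → 2 := fun h => ⟨0, h⟩
  tfae_have 2 → 3 := by
    rintro ⟨a, ha⟩ hcyc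
    obtain ⟨k, c, hk2, hinj, hedge, hch⟩ := exists_chordless adj hirr hcyc
    have h1 : (1 : ℝ) ∈ {lam : ℝ | isComplEig (adjMat adj) lam} :=
      chordless_one adj hk2 hinj hedge hch
    have h0 : (0 : ℝ) ∈ {lam : ℝ | isComplEig (adjMat adj) lam} :=
      zero_isComplEig adj hirr
    rw [ha] at h1 h0
    have : (1 : ℝ) = 0 := h1.trans h0.symm
    norm_num at this
  tfae_have 3 → 1 := by
    intro h3
    ext lam
    simp only [Set.mem_setOf_eq, Set.mem_singleton_iff]
    constructor
    · intro hl
      by_contra hne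
      exact h3 (eig_to_cycle adj hirr hl hne)
    · rintro rfl
      exact zero_isComplEig adj hirr
  tfae_finish
end
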